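/- arXiv:1208.2016 — 11 statements merged into one kernel-verified Lean document; each statement's English description precedes it below -/
import Mathlib

section
/- Let f : ℤ_p → ℤ_p be 1-Lipschitz. If f is surjective, then f is an isometry: |f(y) - f(x)|_p = |y - x|_p for all x, y ∈ ℤ_p. -/
/-!
A 1-Lipschitz map `f` of `ℤ_[p]` induces a map on each finite ring `ℤ/p^nℤ`, which is
surjective because `f` is. A surjection of a finite set is injective, so `f y ≡ f x mod p^n`
forces `y ≡ x mod p^n` for every `n`. As norms on `ℤ_[p]` are determined by the congruences
they encode, `‖y - x‖ ≤ ‖f y - f x‖`.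
-/

namespace PadicInt

variable {p : ℕ} [Fact p.Prime]

theorem toZModPow_eq_iff_norm_sub_le (n : ℕ) (a b : ℤ_[p]) :
    toZModPow n a = toZModPow n b ↔ ‖b - a‖ ≤ (p : ℝ) ^ (-n : ℤ) := by
  rw [norm_le_pow_iff_mem_span_pow, ← ker_toZModPow, RingHom.mem_ker, map_sub, sub_eq_zero,
    eq_comm]

theorem toZModPow_natCast_val (n : ℕ) (a : ZMod (p ^ n)) :
    toZModPow n (a.val : ℤ_[p]) = a := by
  rw [map_natCast, ZMod.natCast_val, ZMod.cast_id]

theorem norm_le_of_forall_norm_le_pow {z w : ℤ_[p]}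
    (h : ∀ n : ℕ, ‖w‖ ≤ (p : ℝ) ^ (-n : ℤ) → ‖z‖ ≤ (p : ℝ) ^ (-n : ℤ)) : ‖z‖ ≤ ‖w‖ := by
  by_contra! hlt
  have hz : z ≠ 0 := by
    rintro rfl
    exact (norm_nonneg w).not_gt (by simpa using hlt)
  rw [norm_eq_zpow_neg_valuation hz, norm_lt_pow_iff_norm_le_pow_sub_one] at hlt
  have hw : ‖w‖ ≤ (p : ℝ) ^ (-(z.valuation + 1 : ℕ) : ℤ) := by
    convert hlt using 2
    push_cast
    ring
  have := (norm_le_pow_iff_le_valuation z hz _).1 (h _ hw)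
  omega

-- For 1-Lipschitz `f` the choice of the lift `a.val` of `a` is immaterial.
noncomputable def mapZModPow (f : ℤ_[p] → ℤ_[p]) (n : ℕ) : ZMod (p ^ n) → ZMod (p ^ n) :=
  fun a => toZModPow n (f (a.val : ℤ_[p]))

section Lipschitz

variable {f : ℤ_[p] → ℤ_[p]}

theorem mapZModPow_toZModPow (hf : ∀ x y : ℤ_[p], ‖f y - f x‖ ≤ ‖y - x‖) (n : ℕ)
    (x : ℤ_[p]) :
    mapZModPow f n (toZModPow n x) = toZModPow n (f x) := by
  apply (toZModPow_eq_iff_norm_sub_le n _ _).2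
  calc ‖f x - f _‖ ≤ ‖x - _‖ := hf _ _
    _ ≤ (p : ℝ) ^ (-n : ℤ) :=
      (toZModPow_eq_iff_norm_sub_le n _ x).1 (toZModPow_natCast_val n _)

theorem surjective_mapZModPow (hf : ∀ x y : ℤ_[p], ‖f y - f x‖ ≤ ‖y - x‖)
    (hs : Function.Surjective f) (n : ℕ) :
    Function.Surjective (mapZModPow f n) := by
  intro b
  obtain ⟨x, hx⟩ := hs (b.val : ℤ_[p])
  exact ⟨toZModPow n x, by rw [mapZModPow_toZModPow hf, hx, toZModPow_natCast_val]⟩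

theorem norm_sub_le_pow_of_norm_map_sub_le_pow
    (hf : ∀ x y : ℤ_[p], ‖f y - f x‖ ≤ ‖y - x‖) (hs : Function.Surjective f) (n : ℕ)
    (x y : ℤ_[p]) (h : ‖f y - f x‖ ≤ (p : ℝ) ^ (-n : ℤ)) : ‖y - x‖ ≤ (p : ℝ) ^ (-n : ℤ) := by
  have hinj : Function.Injective (mapZModPow f n) :=
    Finite.injective_iff_surjective.2 (surjective_mapZModPow hf hs n)
  refine (toZModPow_eq_iff_norm_sub_le n x y).1 (hinj ?_)
  rw [mapZModPow_toZModPow hf, mapZModPow_toZModPow hf]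
  exact (toZModPow_eq_iff_norm_sub_le n (f x) (f y)).2 h

end Lipschitz

end PadicInt

theorem stmt2 (p : ℕ) [Fact p.Prime] (f : ℤ_[p] → ℤ_[p])
    (hlip : ∀ x y : ℤ_[p], ‖f y - f x‖ ≤ ‖y - x‖)
    (hsurj : Function.Surjective f) :
    ∀ x y : ℤ_[p], ‖f y - f x‖ = ‖y - x‖ := fun x y =>
  le_antisymm (hlip x y) <| PadicInt.norm_le_of_forall_norm_le_pow fun n =>
    PadicInt.norm_sub_le_pow_of_norm_map_sub_le_pow hlip hsurj n x y
end

section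
/- Let f : ℤ_p → ℤ_p be 1-Lipschitz. Then f is surjective if and only if for every n ∈ ℕ the induced map f_{/n} : ℤ/p^nℤ → ℤ/p^nℤ (defined by f_{/n}(x mod p^n) = f(x) mod p^n) is bijective. -/
open PadicInt

theorem toZModPow_eq_iff_norm_le (p : ℕ) [Fact p.Prime] (n : ℕ) (a b : ℤ_[p]) :
    PadicInt.toZModPow n a = PadicInt.toZModPow n b ↔ ‖a - b‖ ≤ (p : ℝ) ^ (-(n : ℤ)) := by
  rw [PadicInt.norm_le_pow_iff_mem_span_pow, ← PadicInt.ker_toZModPow, RingHom.mem_ker,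
    map_sub, sub_eq_zero]

theorem stmt3 (p : ℕ) [Fact p.Prime] (f : ℤ_[p] → ℤ_[p])
    (hlip : ∀ x y : ℤ_[p], ‖f y - f x‖ ≤ ‖y - x‖) :
    Function.Surjective f ↔
      ∀ (n : ℕ) (g : ZMod (p ^ n) → ZMod (p ^ n)),
        (∀ x : ℤ_[p], g (PadicInt.toZModPow n x) = PadicInt.toZModPow n (f x)) →
          Function.Bijective g := by
  have hp : 1 < p := (Fact.out : p.Prime).one_lt
  haveI : ∀ n : ℕ, NeZero (p ^ n) := fun n =>
    ⟨pow_ne_zero n (Fact.out : p.Prime).ne_zero⟩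
  constructor
  · intro hf n g hg
    rw [← Finite.surjective_iff_bijective]
    intro z
    obtain ⟨x, hx⟩ := hf ((z.val : ℕ) : ℤ_[p])
    refine ⟨toZModPow n x, ?_⟩
    rw [hg, hx, map_natCast]
    exact ZMod.natCast_rightInverse z
  · intro H y
    set G : ∀ n : ℕ, ZMod (p ^ n) → ZMod (p ^ n) :=
      fun n z => toZModPow n (f (((z.val : ℕ) : ℤ_[p]))) with hG
    have hlift : ∀ (n : ℕ) (z : ZMod (p ^ n)),
        toZModPow n (((z.val : ℕ) : ℤ_[p])) = z := by
      intro n z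
      rw [map_natCast]
      exact ZMod.natCast_rightInverse z
    have hGspec : ∀ (n : ℕ) (x : ℤ_[p]), G n (toZModPow n x) = toZModPow n (f x) := by
      intro n x
      have h1 : toZModPow n ((((toZModPow n x).val : ℕ) : ℤ_[p])) = toZModPow n x :=
        hlift n _
      rw [toZModPow_eq_iff_norm_le] at h1 ⊢
      exact le_trans (hlip _ _) h1
    have hGbij : ∀ n, Function.Bijective (G n) := fun n => H n (G n) (hGspec n)
    choose z hz using fun n => (hGbij n).2 (toZModPow n y)
    set x : ℕ → ℤ_[p] := fun n => (((z n).val : ℕ) : ℤ_[p]) with hxdef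
    have key : ∀ n, toZModPow n (f (x n)) = toZModPow n y := by
      intro n
      have h0 : toZModPow n (x n) = z n := hlift n (z n)
      rw [← hGspec n (x n), h0]
      exact hz n
    have compat : ∀ {N n : ℕ}, N ≤ n → toZModPow N (f (x n)) = toZModPow N y := by
      intro N n h
      rw [← PadicInt.cast_toZModPow N n h, ← PadicInt.cast_toZModPow N n h y, key n]
    have hsame : ∀ {N n : ℕ}, N ≤ n → toZModPow N (x n) = toZModPow N (x N) := by
      intro N n h
      apply (hGbij N).1
      rw [hGspec, hGspec, compat h, compat (le_refl N)]
    have hcauchy : CauchySeq x := by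
      refine cauchySeq_of_le_tendsto_0 (fun N => (p : ℝ) ^ (-(N : ℤ))) ?_ ?_
      · intro n m N hn hm
        have h1 : toZModPow N (x n) = toZModPow N (x m) := by
          rw [hsame hn, hsame hm]
        rw [toZModPow_eq_iff_norm_le] at h1
        rwa [dist_eq_norm]
      · have h1 : Filter.Tendsto (fun N : ℕ => ((p : ℝ)⁻¹) ^ N) Filter.atTop (nhds 0) := by
          apply tendsto_pow_atTop_nhds_zero_of_lt_one
          · positivity
          · rw [inv_lt_one_iff₀]
            right
            exact_mod_cast hp
        have heq : (fun N : ℕ => (p : ℝ) ^ (-(N : ℤ))) = fun N : ℕ => ((p : ℝ)⁻¹) ^ N := by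
          funext N
          rw [zpow_neg, zpow_natCast, inv_pow]
        rw [heq]
        exact h1
    obtain ⟨a, ha⟩ := cauchySeq_tendsto_of_complete hcauchy
    refine ⟨a, ?_⟩
    rw [← PadicInt.ext_of_toZModPow]
    intro N
    have hpos : (0 : ℝ) < (p : ℝ) ^ (-(N : ℤ)) := by positivity
    obtain ⟨M, hM⟩ := (Metric.tendsto_atTop.1 ha) _ hpos
    set n := max M N
    have h1 : ‖x n - a‖ ≤ (p : ℝ) ^ (-(N : ℤ)) := by
      have := hM n (le_max_left _ _)
      rw [dist_eq_norm] at this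
      exact le_of_lt this
    have h2 : toZModPow N (f (x n)) = toZModPow N (f a) := by
      rw [toZModPow_eq_iff_norm_le]
      exact le_trans (hlip _ _) h1
    rw [← h2, compat (le_max_right M N)]
end

section
/- Let f : ℤ_p → ℤ_p be 1-Lipschitz. If f preserves the Haar measure μ_p (i.e., μ_p(f⁻¹(A)) = μ_p(A) for all Borel A), then f is surjective. -/
/-!
A 1-Lipschitz self-map `f` of the compact space `ℤ_[p]` is continuous, so its range is closed.
A translation-invariant probability measure on the compact group `ℤ_[p]` charges every nonempty
open set; as `f` preserves it, no such set has empty preimage, so the range of `f` is also dense.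
-/

open MeasureTheory Set

theorem denseRange_of_measure_preimage_eq {X Y : Type*} [MeasurableSpace X] [TopologicalSpace Y]
    [MeasurableSpace Y] [OpensMeasurableSpace Y] {μ : Measure Y} [μ.IsOpenPosMeasure]
    {ν : Measure X} {f : X → Y} (h : ∀ A, MeasurableSet A → ν (f ⁻¹' A) = μ A) :
    DenseRange f := by
  refine dense_iff_inter_open.2 fun U hU hne => ?_
  have hpre : (f ⁻¹' U).Nonempty := by
    refine nonempty_iff_ne_empty.2 fun hempty => (hU.measure_ne_zero μ hne) ?_
    rw [← h U hU.measurableSet, hempty, measure_empty]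
  obtain ⟨x, hx⟩ := hpre
  exact ⟨f x, hx, mem_range_self x⟩

theorem Continuous.surjective_of_measure_preimage_eq {X Y : Type*} [TopologicalSpace X]
    [CompactSpace X] [MeasurableSpace X] [TopologicalSpace Y] [T2Space Y] [MeasurableSpace Y]
    [OpensMeasurableSpace Y] {μ : Measure Y} [μ.IsOpenPosMeasure] {ν : Measure X} {f : X → Y}
    (hf : Continuous f) (h : ∀ A, MeasurableSet A → ν (f ⁻¹' A) = μ A) :
    Function.Surjective f := by
  rw [← range_eq_univ, ← (isCompact_range hf).isClosed.closure_eq]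
  exact (denseRange_of_measure_preimage_eq h).closure_range

theorem stmt5 (p : ℕ) [Fact p.Prime] [MeasurableSpace ℤ_[p]] [BorelSpace ℤ_[p]]
    (μ : MeasureTheory.Measure ℤ_[p]) [MeasureTheory.IsProbabilityMeasure μ]
    (hinv : ∀ (a : ℤ_[p]) (A : Set ℤ_[p]), MeasurableSet A → μ ((fun x => a + x) ⁻¹' A) = μ A)
    (f : ℤ_[p] → ℤ_[p])
    (hlip : ∀ x y : ℤ_[p], ‖f y - f x‖ ≤ ‖y - x‖)
    (hpres : ∀ A : Set ℤ_[p], MeasurableSet A → μ (f ⁻¹' A) = μ A) :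
    Function.Surjective f := by
  have hcont : Continuous f :=
    (LipschitzWith.of_dist_le_mul (K := 1) fun x y => by
      simpa [dist_eq_norm] using hlip y x).continuous
  have : μ.IsAddLeftInvariant := (forall_measure_preimage_add_iff μ).1 hinv
  have : μ.IsOpenPosMeasure :=
    isOpenPosMeasure_of_addLeftInvariant_of_compact univ isCompact_univ (by simp)
  exact hcont.surjective_of_measure_preimage_eq hpres
end

section
/- Let f : ℤ_p → ℤ_p be a surjective 1-Lipschitz map. Then f is minimal (every forward orbit is dense in ℤ_p) if and only if for every n ∈ ℕ, the induced map f_{/n} on ℤ/p^nℤ has a full cycle (i.e., f_{/n} is a cyclic permutation of all p^n elements). -/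
lemma aux_eq_iff {p : ℕ} [Fact p.Prime] (n : ℕ) (x y : ℤ_[p]) :
    PadicInt.toZModPow n x = PadicInt.toZModPow n y ↔ ‖x - y‖ ≤ (p : ℝ) ^ (-(n : ℤ)) := by
  rw [PadicInt.norm_le_pow_iff_mem_span_pow, ← PadicInt.ker_toZModPow, RingHom.mem_ker,
    map_sub, sub_eq_zero]

theorem stmt8 (p : ℕ) [Fact p.Prime] (f : ℤ_[p] → ℤ_[p])
    (hlip : ∀ x y : ℤ_[p], ‖f y - f x‖ ≤ ‖y - x‖)
    (hsurj : Function.Surjective f) :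
    (∀ x : ℤ_[p], Dense (Set.range fun k : ℕ => f^[k] x)) ↔
      ∀ (n : ℕ) (g : ZMod (p ^ n) → ZMod (p ^ n)),
        (∀ x : ℤ_[p], g (PadicInt.toZModPow n x) = PadicInt.toZModPow n (f x)) →
          ∀ a : ZMod (p ^ n), Set.range (fun k : ℕ => g^[k] a) = Set.univ := by
  have hp1 : (1 : ℝ) < p := by exact_mod_cast (Fact.out : p.Prime).one_lt
  have hπsurj : ∀ n : ℕ, Function.Surjective (PadicInt.toZModPow (p := p) n) := by
    intro n
    exact ZMod.ringHom_surjective _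
  -- the key commuting iteration lemma
  have hiter : ∀ (n : ℕ) (g : ZMod (p ^ n) → ZMod (p ^ n)),
      (∀ x : ℤ_[p], g (PadicInt.toZModPow n x) = PadicInt.toZModPow n (f x)) →
      ∀ (k : ℕ) (x : ℤ_[p]),
        g^[k] (PadicInt.toZModPow n x) = PadicInt.toZModPow n (f^[k] x) := by
    intro n g hg k
    induction k with
    | zero => intro x; simp
    | succ k ih =>
      intro x
      rw [Function.iterate_succ_apply, Function.iterate_succ_apply, hg x]
      exact ih (f x)
  constructor
  · intro hmin n g hg a
    obtain ⟨x, hx⟩ := hπsurj n a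
    ext b
    simp only [Set.mem_univ, iff_true, Set.mem_range]
    obtain ⟨y, hy⟩ := hπsurj n b
    have hd := (Metric.denseRange_iff).mp (hmin x) y ((p : ℝ) ^ (-(n : ℤ)))
      (by positivity)
    obtain ⟨k, hk⟩ := hd
    refine ⟨k, ?_⟩
    rw [← hx, hiter n g hg k x, ← hy]
    rw [aux_eq_iff]
    rw [dist_eq_norm] at hk
    calc ‖f^[k] x - y‖ = ‖y - f^[k] x‖ := by rw [norm_sub_rev]
    _ ≤ _ := le_of_lt hk
  · intro hfull x
    rw [Metric.dense_iff]
    intro y ε hε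
    -- choose n with p^(-n) < ε
    obtain ⟨n, hn⟩ : ∃ n : ℕ, (p : ℝ) ^ (-(n : ℤ)) < ε := by
      obtain ⟨n, hn⟩ := pow_unbounded_of_one_lt (1 / ε) hp1
      refine ⟨n, ?_⟩
      have h1 : (0:ℝ) < (p:ℝ) ^ n := by positivity
      have h2 : (1:ℝ) < (p:ℝ) ^ n * ε := by
        have := mul_lt_mul_of_pos_right hn hε
        rw [one_div_mul_eq_div, div_self (ne_of_gt hε)] at this
        exact this
      rw [zpow_neg, zpow_natCast]
      rw [inv_lt_iff_one_lt_mul₀' h1]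
      exact h2
    -- build g
    set lift : ZMod (p ^ n) → ℤ_[p] := fun a => (hπsurj n a).choose with hlift
    have hliftspec : ∀ a, PadicInt.toZModPow n (lift a) = a := fun a => (hπsurj n a).choose_spec
    set g : ZMod (p ^ n) → ZMod (p ^ n) := fun a => PadicInt.toZModPow n (f (lift a)) with hgdef
    have hg : ∀ z : ℤ_[p], g (PadicInt.toZModPow n z) = PadicInt.toZModPow n (f z) := by
      intro z
      rw [hgdef]
      dsimp only
      rw [aux_eq_iff]
      calc ‖f (lift (PadicInt.toZModPow n z)) - f z‖
          ≤ ‖lift (PadicInt.toZModPow n z) - z‖ := by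
            have := hlip z (lift (PadicInt.toZModPow n z)); exact this
      _ ≤ (p : ℝ) ^ (-(n : ℤ)) := by
            rw [← aux_eq_iff]; exact hliftspec _
    have := hfull n g hg (PadicInt.toZModPow n x)
    have hy : PadicInt.toZModPow n y ∈ Set.range (fun k : ℕ => g^[k] (PadicInt.toZModPow n x)) := by
      rw [this]; trivial
    obtain ⟨k, hk⟩ := hy
    refine ⟨f^[k] x, ?_, ⟨k, rfl⟩⟩
    rw [Metric.mem_ball, dist_eq_norm]
    have : PadicInt.toZModPow n (f^[k] x) = PadicInt.toZModPow n y := by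
      rw [← hiter n g hg k x]; exact hk
    rw [aux_eq_iff] at this
    exact lt_of_le_of_lt this hn
end

section
/- Let f : ℤ_p → ℤ_p be a polynomial with ℤ_p coefficients and n ≥ 1 such that (ℤ/p^nℤ, f_{/n}) is minimal. Then (ℤ/p^{n+1}ℤ, f_{/n+1}) is minimal if and only if for all x ∈ ℤ_p one has f^{p^n}(x) - x ∉ p^{n+1}ℤ_p and (f^{p^n})'(x) ∈ 1 + pℤ_p, and this holds for all x if and only if it holds for some x ∈ ℤ_p. -/
open Polynomial Function
set_option linter.unusedSectionVars false

namespace Stmt11Aux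

section Dyn
variable {α : Type*} [Fintype α] [DecidableEq α] (M : α → α)

theorem iter_mod (a : α) {d : ℕ} (hfix : M^[d] a = a) (k : ℕ) :
    M^[k] a = M^[k % d] a := by
  conv_lhs => rw [← Nat.mod_add_div k d]
  rw [Function.iterate_add_apply, Function.iterate_mul, Function.iterate_fixed hfix]

theorem card_le_of_fix {a : α} (hr : Set.range (fun k : ℕ => M^[k] a) = Set.univ)
    {d : ℕ} (hd : 0 < d) (hfix : M^[d] a = a) : Fintype.card α ≤ d := by
  have hsub : (Finset.univ : Finset α) ⊆ (Finset.range d).image (fun k => M^[k] a) := by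
    intro b _
    obtain ⟨k, hk⟩ := (hr ▸ Set.mem_univ b : b ∈ Set.range fun k : ℕ => M^[k] a)
    exact Finset.mem_image.2 ⟨k % d, Finset.mem_range.2 (Nat.mod_lt _ hd),
      by rw [← iter_mod M a hfix k]; exact hk⟩
  calc Fintype.card α = (Finset.univ : Finset α).card := (Finset.card_univ).symm
    _ ≤ _ := Finset.card_le_card hsub
    _ ≤ d := le_trans Finset.card_image_le (by simp)

theorem bij_of_min (hM : ∀ a, Set.range (fun k : ℕ => M^[k] a) = Set.univ) :
    Function.Bijective M := by
  have hs : Function.Surjective M := by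
    intro b
    obtain ⟨k, hk⟩ :=
      ((hM (M b)) ▸ Set.mem_univ b : b ∈ Set.range fun k : ℕ => M^[k] (M b))
    refine ⟨M^[k] b, ?_⟩
    have h1 : M^[k + 1] b = b := by rw [Function.iterate_succ_apply]; exact hk
    rw [Function.iterate_succ_apply'] at h1
    exact h1
  exact ⟨Finite.injective_iff_surjective.2 hs, hs⟩

theorem iterate_card_fix (hM : ∀ a, Set.range (fun k : ℕ => M^[k] a) = Set.univ) (a : α) :
    M^[Fintype.card α] a = a := by
  have hinj := (bij_of_min M hM).1
  obtain ⟨i, j, hne, hij⟩ :=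
    Fintype.exists_ne_map_eq_of_card_lt (fun k : Fin (Fintype.card α + 1) => M^[(k : ℕ)] a)
      (by simp)
  have key : ∀ i j : ℕ, i < j → j ≤ Fintype.card α → M^[i] a = M^[j] a →
      M^[Fintype.card α] a = a := by
    intro i j hlt hle h
    have hd : M^[j - i] a = a := by
      apply hinj.iterate i
      rw [← Function.iterate_add_apply, Nat.add_sub_cancel' hlt.le]
      exact h.symm
    have hcard : Fintype.card α ≤ j - i :=
      card_le_of_fix M (hM a) (Nat.sub_pos_of_lt hlt) hd
    have heq : j - i = Fintype.card α :=
      le_antisymm (le_trans (Nat.sub_le j i) hle) hcard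
    rw [← heq]; exact hd
  rcases Ne.lt_or_gt hne with h | h
  · exact key i j h j.is_le hij
  · exact key j i h i.is_le hij.symm

theorem exists_iter_eq (hM : ∀ a, Set.range (fun k : ℕ => M^[k] a) = Set.univ) (a b : α) :
    ∃ k, M^[k] a = b := by
  obtain ⟨k, hk⟩ := ((hM a) ▸ Set.mem_univ b : b ∈ Set.range fun k : ℕ => M^[k] a)
  exact ⟨k, hk⟩

end Dyn

section Padic
variable {p : ℕ} [hp : Fact p.Prime]

theorem sub_eq_iff (m : ℕ) (x y : ℤ_[p]) :
    (∃ z : ℤ_[p], x - y = (p : ℤ_[p]) ^ m * z) ↔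
      PadicInt.toZModPow m x = PadicInt.toZModPow m y := by
  have h : PadicInt.toZModPow (p := p) m x = PadicInt.toZModPow m y ↔
      x - y ∈ RingHom.ker (PadicInt.toZModPow (p := p) m) := by
    rw [RingHom.mem_ker, map_sub, sub_eq_zero]
  rw [h, PadicInt.ker_toZModPow, Ideal.mem_span_singleton]
  exact ⟨fun ⟨z, hz⟩ => ⟨z, hz⟩, fun ⟨z, hz⟩ => ⟨z, hz⟩⟩

theorem toZModPow_surj (m : ℕ) :
    Function.Surjective (PadicInt.toZModPow (p := p) m) := by
  haveI : NeZero (p ^ m) := ⟨pow_ne_zero m hp.out.ne_zero⟩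
  intro b
  exact ⟨((b.val : ℕ) : ℤ_[p]), by rw [map_natCast]; exact ZMod.natCast_rightInverse b⟩

theorem map_eval (m : ℕ) (Q : Polynomial ℤ_[p]) (x : ℤ_[p]) :
    (Q.map (PadicInt.toZModPow m)).eval (PadicInt.toZModPow m x) =
      PadicInt.toZModPow m (Q.eval x) := by
  rw [Polynomial.eval_map, Polynomial.eval₂_at_apply]

theorem iter_compat (m k : ℕ) (F : Polynomial ℤ_[p]) (x : ℤ_[p]) :
    (fun a => (F.map (PadicInt.toZModPow m)).eval a)^[k] (PadicInt.toZModPow m x) =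
      PadicInt.toZModPow m ((fun t => F.eval t)^[k] x) := by
  induction k generalizing x with
  | zero => simp
  | succ k ih =>
    rw [Function.iterate_succ_apply', Function.iterate_succ_apply', ih]
    exact map_eval m F _

theorem eval_iter_comp (F : Polynomial ℤ_[p]) (k : ℕ) (x : ℤ_[p]) :
    ((fun Q : Polynomial ℤ_[p] => Q.comp F)^[k] Polynomial.X).eval x =
      (fun t => F.eval t)^[k] x := by
  induction k generalizing x with
  | zero => simp
  | succ k ih =>
    rw [Function.iterate_succ_apply', Function.iterate_succ_apply]
    show (((fun Q : Polynomial ℤ_[p] => Q.comp F)^[k] Polynomial.X).comp F).eval x = _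
    rw [Polynomial.eval_comp]
    exact ih (F.eval x)

theorem comp_iter_comm (F : Polynomial ℤ_[p]) (k : ℕ) :
    ((fun Q : Polynomial ℤ_[p] => Q.comp F)^[k] Polynomial.X).comp F =
      F.comp ((fun Q : Polynomial ℤ_[p] => Q.comp F)^[k] Polynomial.X) := by
  induction k with
  | zero => simp
  | succ k ih =>
    simp only [Function.iterate_succ_apply']
    rw [ih, Polynomial.comp_assoc, ih]

theorem deriv_iter (F : Polynomial ℤ_[p]) (k : ℕ) (x : ℤ_[p]) :
    (Polynomial.derivative ((fun Q : Polynomial ℤ_[p] => Q.comp F)^[k] Polynomial.X)).eval x =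
      ∏ i ∈ Finset.range k, (Polynomial.derivative F).eval ((fun t => F.eval t)^[i] x) := by
  induction k generalizing x with
  | zero => simp
  | succ k ih =>
    simp only [Function.iterate_succ_apply']
    rw [Polynomial.derivative_comp, Polynomial.eval_mul, Polynomial.eval_comp, ih (F.eval x),
      Finset.prod_range_succ']
    simp only [Function.iterate_succ_apply, Function.iterate_zero_apply]
    exact mul_comm _ _

theorem deriv_step (F : Polynomial ℤ_[p]) (k : ℕ) (x : ℤ_[p]) :
    (Polynomial.derivative ((fun Q : Polynomial ℤ_[p] => Q.comp F)^[k] Polynomial.X)).eval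
        (F.eval x) * (Polynomial.derivative F).eval x =
      (Polynomial.derivative F).eval ((fun t => F.eval t)^[k] x) *
        (Polynomial.derivative ((fun Q : Polynomial ℤ_[p] => Q.comp F)^[k] Polynomial.X)).eval
          x := by
  have h := congrArg (fun Q => Polynomial.eval x (Polynomial.derivative Q)) (comp_iter_comm F k)
  simp only [Polynomial.derivative_comp, Polynomial.eval_mul, Polynomial.eval_comp] at h
  rw [eval_iter_comp] at h
  linear_combination h

theorem taylor_g (F : Polynomial ℤ_[p]) (n : ℕ) (x t : ℤ_[p]) :
    ∃ w, (fun s => F.eval s)^[p ^ n] (x + t) =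
      (fun s => F.eval s)^[p ^ n] x +
        (Polynomial.derivative ((fun Q : Polynomial ℤ_[p] => Q.comp F)^[p ^ n]
          Polynomial.X)).eval x * t + w * t ^ 2 := by
  obtain ⟨w, hw⟩ :=
    Polynomial.binomExpansion ((fun Q : Polynomial ℤ_[p] => Q.comp F)^[p ^ n] Polynomial.X) x t
  exact ⟨w, by rw [← eval_iter_comp, ← eval_iter_comp]; exact hw⟩

theorem bcond_iff (r : ℤ_[p]) :
    (∃ z : ℤ_[p], r = 1 + (p : ℤ_[p]) * z) ↔ PadicInt.toZModPow 1 r = 1 := by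
  have h := sub_eq_iff (p := p) 1 r 1
  rw [pow_one, map_one] at h
  rw [← h]
  constructor
  · rintro ⟨z, hz⟩; exact ⟨z, by linear_combination hz⟩
  · rintro ⟨z, hz⟩; exact ⟨z, by linear_combination hz⟩

end Padic

section Main
variable {p : ℕ} [hp : Fact p.Prime]

def Cond (F : Polynomial ℤ_[p]) (n : ℕ) (x : ℤ_[p]) : Prop :=
  (¬ ∃ z : ℤ_[p], (fun t => F.eval t)^[p ^ n] x - x = (p : ℤ_[p]) ^ (n + 1) * z) ∧
    ∃ z : ℤ_[p],
      Polynomial.eval x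
        (Polynomial.derivative ((fun Q : Polynomial ℤ_[p] => Q.comp F)^[p ^ n] Polynomial.X)) =
        1 + (p : ℤ_[p]) * z

variable (F : Polynomial ℤ_[p]) (n : ℕ)

theorem hfix_lemma
    (hGn : ∀ a : ZMod (p ^ n), Set.range
      (fun k : ℕ => (fun b => (F.map (PadicInt.toZModPow n)).eval b)^[k] a) = Set.univ)
    (x : ℤ_[p]) :
    PadicInt.toZModPow n ((fun t => F.eval t)^[p ^ n] x) = PadicInt.toZModPow n x := by
  haveI : NeZero (p ^ n) := ⟨pow_ne_zero n hp.out.ne_zero⟩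
  have h := iterate_card_fix _ hGn (PadicInt.toZModPow n x)
  rw [ZMod.card (p ^ n), iter_compat] at h
  exact h

theorem htrans_lemma
    (hGn : ∀ a : ZMod (p ^ n), Set.range
      (fun k : ℕ => (fun b => (F.map (PadicInt.toZModPow n)).eval b)^[k] a) = Set.univ)
    (x y : ℤ_[p]) :
    ∃ k, PadicInt.toZModPow n ((fun t => F.eval t)^[k] x) = PadicInt.toZModPow n y := by
  obtain ⟨k, hk⟩ := exists_iter_eq _ hGn (PadicInt.toZModPow n x) (PadicInt.toZModPow n y)
  exact ⟨k, by rw [← iter_compat]; exact hk⟩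

theorem down_lemma {m m' : ℕ} (h : m' ≤ m) {a b : ℤ_[p]}
    (hab : PadicInt.toZModPow m a = PadicInt.toZModPow m b) :
    PadicInt.toZModPow m' a = PadicInt.toZModPow m' b := by
  rw [← PadicInt.cast_toZModPow m' m h a, ← PadicInt.cast_toZModPow m' m h b, hab]

theorem fiber_orbit (hn : 1 ≤ n) (x u z : ℤ_[p])
    (hu : (fun t => F.eval t)^[p ^ n] x = x + (p : ℤ_[p]) ^ n * u)
    (hD : Polynomial.eval x
      (Polynomial.derivative ((fun Q : Polynomial ℤ_[p] => Q.comp F)^[p ^ n] Polynomial.X)) =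
        1 + (p : ℤ_[p]) * z)
    (i : ℕ) :
    ∃ w, ((fun t => F.eval t)^[p ^ n])^[i] x =
      x + (p : ℤ_[p]) ^ n * ((i : ℤ_[p]) * u + (p : ℤ_[p]) * w) := by
  obtain ⟨m, hm⟩ := Nat.exists_eq_add_of_le hn
  subst hm
  induction i with
  | zero => exact ⟨0, by simp⟩
  | succ i ih =>
    obtain ⟨w, hw⟩ := ih
    obtain ⟨w2, hw2⟩ :=
      taylor_g F (1 + m) x ((p : ℤ_[p]) ^ (1 + m) * ((i : ℤ_[p]) * u + (p : ℤ_[p]) * w))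
    refine ⟨w + z * ((i : ℤ_[p]) * u + (p : ℤ_[p]) * w) +
      (p : ℤ_[p]) ^ m * w2 * ((i : ℤ_[p]) * u + (p : ℤ_[p]) * w) ^ 2, ?_⟩
    rw [Function.iterate_succ_apply', hw, hw2, hu, hD]
    push_cast
    ring

theorem min_succ_of_cond (hn : 1 ≤ n)
    (hGn : ∀ a : ZMod (p ^ n), Set.range
      (fun k : ℕ => (fun b => (F.map (PadicInt.toZModPow n)).eval b)^[k] a) = Set.univ)
    (hcond : ∀ x : ℤ_[p], Cond F n x) :
    ∀ a : ZMod (p ^ (n + 1)), Set.range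
      (fun k : ℕ => (fun b => (F.map (PadicInt.toZModPow (n + 1))).eval b)^[k] a) = Set.univ := by
  intro a
  apply Set.eq_univ_of_forall
  intro b
  obtain ⟨x, rfl⟩ := toZModPow_surj (n + 1) a
  obtain ⟨y, rfl⟩ := toZModPow_surj (n + 1) b
  obtain ⟨j, hj⟩ := htrans_lemma F n hGn x y
  set x₁ := (fun t => F.eval t)^[j] x with hx₁
  obtain ⟨s, hs⟩ := (sub_eq_iff n y x₁).2 hj.symm
  obtain ⟨u', hu'⟩ :=
    (sub_eq_iff n ((fun t => F.eval t)^[p ^ n] x₁) x₁).2 (hfix_lemma F n hGn x₁)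
  have hu : (fun t => F.eval t)^[p ^ n] x₁ = x₁ + (p : ℤ_[p]) ^ n * u' := by
    linear_combination hu'
  haveI : Fact (p ^ 1).Prime := ⟨by rw [pow_one]; exact hp.out⟩
  haveI : NeZero (p ^ 1) := ⟨pow_ne_zero 1 hp.out.ne_zero⟩
  have hu0 : PadicInt.toZModPow 1 u' ≠ 0 := by
    intro h0
    obtain ⟨z, hz⟩ := (sub_eq_iff 1 u' 0).2 (by rw [map_zero]; exact h0)
    rw [pow_one] at hz
    exact (hcond x₁).1 ⟨z, by linear_combination hu' + (p : ℤ_[p]) ^ n * hz⟩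
  set c : ZMod (p ^ 1) := PadicInt.toZModPow 1 u' with hc
  set i : ℕ := ((PadicInt.toZModPow 1 s) * c⁻¹).val with hi
  have hiu : PadicInt.toZModPow 1 ((i : ℤ_[p]) * u') = PadicInt.toZModPow 1 s := by
    rw [map_mul, map_natCast, ← hc]
    have hcast : (((PadicInt.toZModPow 1 s * c⁻¹).val : ℕ) : ZMod (p ^ 1)) =
        PadicInt.toZModPow 1 s * c⁻¹ := ZMod.natCast_rightInverse _
    rw [hi, hcast, mul_assoc, inv_mul_cancel₀ hu0, mul_one]
  obtain ⟨z, hz⟩ := (sub_eq_iff 1 ((i : ℤ_[p]) * u') s).2 hiu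
  rw [pow_one] at hz
  obtain ⟨zd, hzd⟩ := (hcond x₁).2
  obtain ⟨w, hw⟩ := fiber_orbit F n hn x₁ u' zd hu hzd i
  refine ⟨p ^ n * i + j, ?_⟩
  show (fun b => (F.map (PadicInt.toZModPow (n + 1))).eval b)^[p ^ n * i + j]
      (PadicInt.toZModPow (n + 1) x) = PadicInt.toZModPow (n + 1) y
  rw [iter_compat, Function.iterate_add_apply, Function.iterate_mul, ← hx₁]
  exact (sub_eq_iff (n + 1) _ _).1
    ⟨z + w, by linear_combination hw - hs + (p : ℤ_[p]) ^ n * hz⟩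

theorem cond_of_min (hn : 1 ≤ n)
    (hGn : ∀ a : ZMod (p ^ n), Set.range
      (fun k : ℕ => (fun b => (F.map (PadicInt.toZModPow n)).eval b)^[k] a) = Set.univ)
    (hM : ∀ a : ZMod (p ^ (n + 1)), Set.range
      (fun k : ℕ => (fun b => (F.map (PadicInt.toZModPow (n + 1))).eval b)^[k] a) = Set.univ) :
    ∀ x : ℤ_[p], Cond F n x := by
  obtain ⟨m, hm⟩ := Nat.exists_eq_add_of_le hn
  haveI : NeZero (p ^ (n + 1)) := ⟨pow_ne_zero _ hp.out.ne_zero⟩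
  have hnofix : ∀ x : ℤ_[p],
      PadicInt.toZModPow (n + 1) ((fun t => F.eval t)^[p ^ n] x) ≠
        PadicInt.toZModPow (n + 1) x := by
    intro x h
    have hfix1 : (fun b => (F.map (PadicInt.toZModPow (n + 1))).eval b)^[p ^ n]
        (PadicInt.toZModPow (n + 1) x) = PadicInt.toZModPow (n + 1) x := by
      rw [iter_compat]; exact h
    have hcard := card_le_of_fix _ (hM (PadicInt.toZModPow (n + 1) x))
      (pow_pos hp.out.pos n) hfix1
    rw [ZMod.card (p ^ (n + 1))] at hcard
    exact absurd hcard (not_le.2 (pow_lt_pow_right₀ hp.out.one_lt (Nat.lt_succ_self n)))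
  intro x
  constructor
  · rintro ⟨z, hz⟩
    exact hnofix x ((sub_eq_iff (n + 1) _ x).1 ⟨z, hz⟩)
  · by_contra hno
    have hdvd : ¬ ((p : ℤ_[p]) ∣ (Polynomial.eval x
        (Polynomial.derivative ((fun Q : Polynomial ℤ_[p] => Q.comp F)^[p ^ n]
          Polynomial.X)) - 1)) := by
      rintro ⟨z, hz⟩
      exact hno ⟨z, by linear_combination hz⟩
    have hunit : IsUnit (Polynomial.eval x
        (Polynomial.derivative ((fun Q : Polynomial ℤ_[p] => Q.comp F)^[p ^ n]
          Polynomial.X)) - 1) := by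
      rw [PadicInt.isUnit_iff]
      exact le_antisymm (PadicInt.norm_le_one _)
        (not_lt.1 fun hlt => hdvd ((PadicInt.norm_lt_one_iff_dvd _).1 hlt))
    obtain ⟨cu, hcu⟩ := hunit
    have hvc : (↑cu⁻¹ : ℤ_[p]) * (Polynomial.eval x
        (Polynomial.derivative ((fun Q : Polynomial ℤ_[p] => Q.comp F)^[p ^ n]
          Polynomial.X)) - 1) = 1 := by
      rw [← hcu]; exact cu.inv_mul
    obtain ⟨u', hu'⟩ :=
      (sub_eq_iff n ((fun t => F.eval t)^[p ^ n] x) x).2 (hfix_lemma F n hGn x)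
    obtain ⟨w, hw⟩ := taylor_g F n x ((p : ℤ_[p]) ^ n * (-(u' * ↑cu⁻¹)))
    apply hnofix (x + (p : ℤ_[p]) ^ n * (-(u' * ↑cu⁻¹)))
    apply (sub_eq_iff (n + 1) _ _).1
    refine ⟨(p : ℤ_[p]) ^ m * w * (-(u' * ↑cu⁻¹)) ^ 2, ?_⟩
    rw [hw]
    subst hm
    linear_combination hu' + (-((p : ℤ_[p]) ^ (1 + m) * u')) * hvc

theorem cond_of_one (hn : 1 ≤ n)
    (hGn : ∀ a : ZMod (p ^ n), Set.range
      (fun k : ℕ => (fun b => (F.map (PadicInt.toZModPow n)).eval b)^[k] a) = Set.univ)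
    (x₀ : ℤ_[p]) (h₀ : Cond F n x₀) : ∀ x : ℤ_[p], Cond F n x := by
  obtain ⟨m, hm⟩ := Nat.exists_eq_add_of_le hn
  haveI hf1 : Fact (p ^ 1).Prime := ⟨by rw [pow_one]; exact hp.out⟩
  haveI : NeZero (p ^ 1) := ⟨pow_ne_zero 1 hp.out.ne_zero⟩
  obtain ⟨ha₀, hb₀⟩ := h₀
  have hD₀ : PadicInt.toZModPow 1 (Polynomial.eval x₀
      (Polynomial.derivative ((fun Q : Polynomial ℤ_[p] => Q.comp F)^[p ^ n]
        Polynomial.X))) = 1 := (bcond_iff _).1 hb₀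
  have hfixn := hfix_lemma F n hGn
  have hfix1 : ∀ c : ZMod (p ^ 1),
      (fun b => (F.map (PadicInt.toZModPow 1)).eval b)^[p ^ n] c = c := by
    intro c
    obtain ⟨y, rfl⟩ := toZModPow_surj 1 c
    rw [iter_compat]
    exact down_lemma hn (hfixn y)
  have hDall : ∀ x : ℤ_[p], PadicInt.toZModPow 1 (Polynomial.eval x
      (Polynomial.derivative ((fun Q : Polynomial ℤ_[p] => Q.comp F)^[p ^ n]
        Polynomial.X))) = 1 := by
    by_cases hall : ∀ y : ℤ_[p],
        PadicInt.toZModPow 1 (Polynomial.eval y (Polynomial.derivative F)) ≠ 0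
    · have hstep : ∀ y : ℤ_[p],
          PadicInt.toZModPow 1 (Polynomial.eval (F.eval y)
            (Polynomial.derivative ((fun Q : Polynomial ℤ_[p] => Q.comp F)^[p ^ n]
              Polynomial.X))) =
          PadicInt.toZModPow 1 (Polynomial.eval y
            (Polynomial.derivative ((fun Q : Polynomial ℤ_[p] => Q.comp F)^[p ^ n]
              Polynomial.X))) := by
        intro y
        have h := congrArg (PadicInt.toZModPow 1) (deriv_step F (p ^ n) y)
        have h2 : PadicInt.toZModPow 1 (Polynomial.eval ((fun t => F.eval t)^[p ^ n] y)
            (Polynomial.derivative F)) =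
            PadicInt.toZModPow 1 (Polynomial.eval y (Polynomial.derivative F)) := by
          rw [← map_eval 1 (Polynomial.derivative F) ((fun t => F.eval t)^[p ^ n] y),
            down_lemma hn (hfixn y)]
          exact map_eval 1 _ y
        rw [map_mul, map_mul, h2] at h
        exact mul_right_cancel₀ (hall y) (by linear_combination h)
      have horb : ∀ i : ℕ, PadicInt.toZModPow 1 (Polynomial.eval ((fun t => F.eval t)^[i] x₀)
          (Polynomial.derivative ((fun Q : Polynomial ℤ_[p] => Q.comp F)^[p ^ n]
            Polynomial.X))) = 1 := by
        intro i
        induction i with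
        | zero => exact hD₀
        | succ i ih =>
          simp only [Function.iterate_succ_apply']
          rw [hstep]
          exact ih
      intro x
      obtain ⟨k, hk⟩ := htrans_lemma F n hGn x₀ x
      have h1 : PadicInt.toZModPow 1 ((fun t => F.eval t)^[k] x₀) = PadicInt.toZModPow 1 x :=
        down_lemma hn hk
      rw [← map_eval 1 _ x, ← h1, map_eval 1 _]
      exact horb k
    · exfalso
      push_neg at hall
      obtain ⟨y, hy⟩ := hall
      obtain ⟨k, hk⟩ := htrans_lemma F n hGn x₀ y
      have hkp : PadicInt.toZModPow 1 ((fun t => F.eval t)^[k % p ^ n] x₀) =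
          PadicInt.toZModPow 1 y := by
        have e1 : (fun b => (F.map (PadicInt.toZModPow 1)).eval b)^[k]
            (PadicInt.toZModPow 1 x₀) =
            (fun b => (F.map (PadicInt.toZModPow 1)).eval b)^[k % p ^ n]
            (PadicInt.toZModPow 1 x₀) :=
          iter_mod _ _ (hfix1 _) k
        rw [iter_compat, iter_compat] at e1
        rw [← e1]
        exact down_lemma hn hk
      have hzero : PadicInt.toZModPow 1 (Polynomial.eval x₀
          (Polynomial.derivative ((fun Q : Polynomial ℤ_[p] => Q.comp F)^[p ^ n]
            Polynomial.X))) = 0 := by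
        rw [deriv_iter, map_prod]
        apply Finset.prod_eq_zero
          (Finset.mem_range.2 (Nat.mod_lt k (pow_pos hp.out.pos n)))
        rw [← map_eval 1 (Polynomial.derivative F), hkp, map_eval 1]
        exact hy
      rw [hzero] at hD₀
      exact zero_ne_one hD₀
  have hnofix : ∀ x : ℤ_[p],
      ¬ ∃ z : ℤ_[p], (fun t => F.eval t)^[p ^ n] x - x = (p : ℤ_[p]) ^ (n + 1) * z := by
    rintro x₁ ⟨z₁, hz₁⟩
    have hstepj : ∀ j : ℕ,
        PadicInt.toZModPow (n + 1) ((fun t => F.eval t)^[p ^ n] ((fun t => F.eval t)^[j] x₁)) =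
          PadicInt.toZModPow (n + 1) ((fun t => F.eval t)^[j] x₁) := by
      intro j
      have hcomm : (fun t => F.eval t)^[p ^ n] ((fun t => F.eval t)^[j] x₁) =
          (fun t => F.eval t)^[j] ((fun t => F.eval t)^[p ^ n] x₁) := by
        rw [← Function.iterate_add_apply, ← Function.iterate_add_apply, Nat.add_comm]
      rw [hcomm]
      have h1 : PadicInt.toZModPow (n + 1) ((fun t => F.eval t)^[p ^ n] x₁) =
          PadicInt.toZModPow (n + 1) x₁ := (sub_eq_iff _ _ _).1 ⟨z₁, hz₁⟩
      rw [← iter_compat (n + 1) j F, ← iter_compat (n + 1) j F, h1]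
    obtain ⟨j, hj⟩ := htrans_lemma F n hGn x₁ x₀
    obtain ⟨s, hs⟩ := (sub_eq_iff n ((fun t => F.eval t)^[j] x₁) x₀).2 hj
    obtain ⟨w, hw⟩ := taylor_g F n x₀ ((p : ℤ_[p]) ^ n * s)
    obtain ⟨zd, hzd⟩ := hb₀
    obtain ⟨zz, hzz⟩ := (sub_eq_iff (n + 1) _ _).2 (hstepj j)
    apply ha₀
    refine ⟨zz - zd * s - (p : ℤ_[p]) ^ m * w * s ^ 2, ?_⟩
    have hx2 : (fun t => F.eval t)^[j] x₁ = x₀ + (p : ℤ_[p]) ^ n * s := by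
      linear_combination hs
    rw [hx2, hw] at hzz
    subst hm
    linear_combination hzz - ((p : ℤ_[p]) ^ (1 + m) * s) * hzd
  intro x
  exact ⟨hnofix x, (bcond_iff _).2 (hDall x)⟩

end Main

end Stmt11Aux


theorem stmt11 (p : ℕ) [Fact p.Prime] (F : Polynomial ℤ_[p]) (n : ℕ) (hn : 1 ≤ n)
    (hmin : ∀ g : ZMod (p ^ n) → ZMod (p ^ n),
      (∀ x : ℤ_[p], g (PadicInt.toZModPow n x) = PadicInt.toZModPow n (F.eval x)) →
        ∀ a : ZMod (p ^ n), Set.range (fun k : ℕ => g^[k] a) = Set.univ) :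
    ((∀ g : ZMod (p ^ (n + 1)) → ZMod (p ^ (n + 1)),
        (∀ x : ℤ_[p], g (PadicInt.toZModPow (n + 1) x) = PadicInt.toZModPow (n + 1) (F.eval x)) →
          ∀ a : ZMod (p ^ (n + 1)), Set.range (fun k : ℕ => g^[k] a) = Set.univ) ↔
      (∀ x : ℤ_[p],
        (¬ ∃ z : ℤ_[p], (fun t => F.eval t)^[p ^ n] x - x = (p : ℤ_[p]) ^ (n + 1) * z) ∧
          ∃ z : ℤ_[p],
            Polynomial.eval x
              (Polynomial.derivative ((fun Q : Polynomial ℤ_[p] => Q.comp F)^[p ^ n] Polynomial.X)) =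
              1 + (p : ℤ_[p]) * z)) ∧
    ((∀ x : ℤ_[p],
        (¬ ∃ z : ℤ_[p], (fun t => F.eval t)^[p ^ n] x - x = (p : ℤ_[p]) ^ (n + 1) * z) ∧
          ∃ z : ℤ_[p],
            Polynomial.eval x
              (Polynomial.derivative ((fun Q : Polynomial ℤ_[p] => Q.comp F)^[p ^ n] Polynomial.X)) =
              1 + (p : ℤ_[p]) * z) ↔
      (∃ x : ℤ_[p],
        (¬ ∃ z : ℤ_[p], (fun t => F.eval t)^[p ^ n] x - x = (p : ℤ_[p]) ^ (n + 1) * z) ∧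
          ∃ z : ℤ_[p],
            Polynomial.eval x
              (Polynomial.derivative ((fun Q : Polynomial ℤ_[p] => Q.comp F)^[p ^ n] Polynomial.X)) =
              1 + (p : ℤ_[p]) * z)) := by
  have hGn : ∀ a : ZMod (p ^ n), Set.range
      (fun k : ℕ => (fun b => (F.map (PadicInt.toZModPow n)).eval b)^[k] a) = Set.univ :=
    hmin _ (fun x => Stmt11Aux.map_eval n F x)
  constructor
  · constructor
    · intro hLHS x
      exact Stmt11Aux.cond_of_min F n hn hGn
        (hLHS _ (fun x => Stmt11Aux.map_eval (n + 1) F x)) x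
    · intro hcond g hg a
      have hge : g = fun b => (F.map (PadicInt.toZModPow (n + 1))).eval b := by
        funext b
        obtain ⟨x, rfl⟩ := Stmt11Aux.toZModPow_surj (n + 1) b
        rw [hg x]
        exact (Stmt11Aux.map_eval (n + 1) F x).symm
      rw [hge]
      exact Stmt11Aux.min_succ_of_cond F n hn hGn hcond a
  · exact ⟨fun h => ⟨0, h 0⟩, fun ⟨x₀, h₀⟩ x =>
      Stmt11Aux.cond_of_one F n hn hGn x₀ h₀ x⟩
end

section
/- Let f be a polynomial with coefficients in ℤ_p, and let x₀ ∈ ℤ_p and n ≥ 1 satisfy f^{p^n}(x₀) ≡ x₀ mod p^n. Set β_n(x) = (f^{p^n}(x) - x)/p^n. Then β_n(f(x₀)) ≡ β_n(x₀)·f'(x₀) mod p^n. -/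
theorem stmt12 (p : ℕ) [Fact p.Prime] (F : Polynomial ℤ_[p]) (x₀ c c' : ℤ_[p]) (n : ℕ)
    (hn : 1 ≤ n)
    (hc : (fun t => F.eval t)^[p ^ n] x₀ - x₀ = (p : ℤ_[p]) ^ n * c)
    (hc' : (fun t => F.eval t)^[p ^ n] (F.eval x₀) - F.eval x₀ = (p : ℤ_[p]) ^ n * c') :
    ∃ z : ℤ_[p], c' - c * Polynomial.eval x₀ (Polynomial.derivative F) = (p : ℤ_[p]) ^ n * z := by
  obtain ⟨k, hk⟩ := F.binomExpansion x₀ ((p : ℤ_[p]) ^ n * c)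
  have hg : (fun t => F.eval t)^[p ^ n] x₀ = x₀ + (p : ℤ_[p]) ^ n * c := by
    linear_combination hc
  have hcomm : (fun t => F.eval t)^[p ^ n] (F.eval x₀)
      = F.eval ((fun t => F.eval t)^[p ^ n] x₀) := by
    rw [← Function.iterate_succ_apply, Function.iterate_succ_apply']
  refine ⟨c * c * k, ?_⟩
  have hp : ((p : ℤ_[p]) ^ n) ≠ 0 := by
    exact pow_ne_zero _ (Nat.cast_ne_zero.mpr (Fact.out (p := p.Prime)).ne_zero)
  have : (p : ℤ_[p]) ^ n * c' = (p : ℤ_[p]) ^ n * ((p : ℤ_[p]) ^ n *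
      (c * c * k) + c * Polynomial.eval x₀ (Polynomial.derivative F)) := by
    rw [← hc', hcomm, hg, hk]; ring
  have := mul_left_cancel₀ hp this
  linear_combination this
end

section
/- Let f be a polynomial with coefficients in ℤ_3. Then the dynamical system (ℤ_3, f) is minimal (all orbits dense) if and only if the induced map f_{/3} on ℤ/27ℤ is minimal (has a full cycle of length 27). -/
/-!
Write `f = F.eval`. The map induced on `ℤ/p^nℤ` is a single cycle iff one point has exact period
`p^n`, and dense orbits on `ℤ_p` amount to single cycles at every level `n`. A single cycle mod `27`
forces `(f^[3^k])' ≡ 1 (mod 3)` for all `k ≥ 1`: otherwise `f^[9]` has a point that is fixed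
mod `27`, found by one Newton step. Given this congruence, Taylor-expanding three iterates of
`P = f^[3^n]` with `n ≥ 2` gives `f^[3^(n+1)] x - x ≡ 3 (f^[3^n] x - x) (mod 3^(n+2))`, so exact
period `3^(n+1)` mod `3^(n+1)` propagates to exact period `3^(n+2)` mod `3^(n+2)`.
-/

open Function Polynomial

section MinimalMaps

variable {α β : Type*}

def IsMinimal (σ : α → α) : Prop :=
  ∀ a, Set.range (fun k : ℕ => σ^[k] a) = Set.univ

theorem isMinimal_iff_of_semiconj {π : β → α} (hπ : Surjective π) {f : β → β} {σ : α → α}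
    (h : Semiconj π f σ) : IsMinimal σ ↔ ∀ x y, ∃ k, π (f^[k] x) = π y := by
  simp only [IsMinimal, Set.eq_univ_iff_forall, Set.mem_range, hπ.forall,
    ← (h.iterate_right _).eq]

variable [Finite α] {σ : α → α}

theorem IsMinimal.minimalPeriod_eq (h : IsMinimal σ) (a : α) :
    minimalPeriod σ a = Nat.card α := by
  have ha : a ∈ periodicPts σ := by
    obtain ⟨k, hk⟩ := Set.eq_univ_iff_forall.1 (h (σ a)) a
    exact ⟨k + 1, k.succ_pos, hk⟩
  refine le_antisymm ?_ ?_
  · simpa using Nat.card_le_card_of_injective (fun k : Fin (minimalPeriod σ a) => σ^[k] a)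
      fun i j hij => Fin.ext <| iterate_injOn_Iio_minimalPeriod i.2 j.2 hij
  · refine (Nat.card_le_card_of_surjective (fun k : Fin (minimalPeriod σ a) => σ^[k] a)
      fun b => ?_).trans_eq (Nat.card_fin _)
    obtain ⟨k, rfl⟩ := Set.eq_univ_iff_forall.1 (h a) b
    exact ⟨⟨k % _, Nat.mod_lt _ (minimalPeriod_pos_of_mem_periodicPts ha)⟩,
      iterate_mod_minimalPeriod_eq⟩

theorem range_iterate_eq_univ_of_minimalPeriod_eq {a : α} (h : minimalPeriod σ a = Nat.card α) :
    Set.range (fun k : ℕ => σ^[k] a) = Set.univ := by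
  have hinj : Injective fun k : Fin (minimalPeriod σ a) => σ^[k] a :=
    fun i j hij => Fin.ext <| iterate_injOn_Iio_minimalPeriod i.2 j.2 hij
  have hsurj := (hinj.bijective_of_nat_card_le (by simp [h])).2
  exact Set.eq_univ_of_forall fun b => (hsurj b).elim fun k hk => ⟨k, hk⟩

theorem isMinimal_of_minimalPeriod_eq {a : α} (h : minimalPeriod σ a = Nat.card α) :
    IsMinimal σ := by
  have ha : a ∈ periodicPts σ :=
    minimalPeriod_pos_iff_mem_periodicPts.1 (h ▸ have : Nonempty α := ⟨a⟩; Nat.card_pos)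
  intro b
  obtain ⟨k, rfl⟩ := Set.eq_univ_iff_forall.1 (range_iterate_eq_univ_of_minimalPeriod_eq h) b
  exact range_iterate_eq_univ_of_minimalPeriod_eq (by rw [minimalPeriod_apply_iterate ha, h])

end MinimalMaps

namespace PadicInt

variable {p : ℕ} [Fact p.Prime]

theorem toZModPow_eq_iff_dvd {n : ℕ} {x y : ℤ_[p]} :
    toZModPow n x = toZModPow n y ↔ (p : ℤ_[p]) ^ n ∣ x - y := by
  rw [← sub_eq_zero, ← map_sub, ← RingHom.mem_ker, ker_toZModPow, Ideal.mem_span_singleton]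

theorem toZMod_eq_iff_dvd {x y : ℤ_[p]} : toZMod x = toZMod y ↔ (p : ℤ_[p]) ∣ x - y := by
  rw [← sub_eq_zero, ← map_sub, ← RingHom.mem_ker, ker_toZMod, maximalIdeal_eq_span_p,
    Ideal.mem_span_singleton]

theorem dense_iff_forall_dvd {s : Set ℤ_[p]} :
    Dense s ↔ ∀ (n : ℕ) (y : ℤ_[p]), ∃ x ∈ s, (p : ℤ_[p]) ^ n ∣ x - y := by
  simp_rw [← Ideal.mem_span_singleton, ← norm_le_pow_iff_mem_span_pow, Metric.dense_iff]
  constructor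
  · intro h n y
    obtain ⟨x, hx, hxs⟩ := h y _ (zpow_pos (Nat.cast_pos.2 (Fact.out : p.Prime).pos) (-n))
    exact ⟨x, hxs, (mem_ball_iff_norm.1 hx).le⟩
  · intro h y r hr
    obtain ⟨n, hn⟩ := exists_pow_neg_lt p hr
    obtain ⟨x, hxs, hx⟩ := h n y
    exact ⟨x, mem_ball_iff_norm.2 (hx.trans_lt hn), hxs⟩

end PadicInt

namespace Polynomial

section IterateComp

variable {R : Type*} [CommRing R] (F : R[X])

theorem iterate_comp_X_eval (m : ℕ) (x : R) : (F.comp^[m] X).eval x = (F.eval ·)^[m] x := by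
  rw [iterate_comp_eval, eval_X]

theorem iterate_comp_eq_comp (m : ℕ) (q : R[X]) : F.comp^[m] q = (F.comp^[m] X).comp q := by
  induction m with
  | zero => simp
  | succ m ih => rw [iterate_succ_apply', iterate_succ_apply', ih, comp_assoc]

theorem iterate_comp_X_mul (a b : ℕ) : F.comp^[a * b] X = (F.comp^[a] X).comp^[b] X := by
  induction b with
  | zero => simp
  | succ b ih => rw [Nat.mul_succ, add_comm, iterate_add_apply, iterate_comp_eq_comp, ih,
      iterate_succ_apply']

theorem derivative_iterate_comp_X_eval (m : ℕ) (x : R) :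
    (F.comp^[m] X).derivative.eval x =
      ∏ i ∈ Finset.range m, F.derivative.eval ((F.eval ·)^[i] x) := by
  induction m with
  | zero => simp
  | succ m ih =>
    rw [iterate_succ_apply', derivative_comp, eval_mul, ih, eval_comp, iterate_comp_X_eval,
      Finset.prod_range_succ]

theorem three_pow_add_two_dvd_iterate_comp_three_sub {P : R[X]} {n : ℕ} (hn : 2 ≤ n) {x : R}
    (hx : (3 : R) ^ n ∣ P.eval x - x)
    (hD : (3 : R) ∣ P.derivative.eval x - 1) :
    (3 : R) ^ (n + 2) ∣ (P.comp^[3] X).eval x - x - 3 * (P.eval x - x) := by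
  obtain ⟨m, rfl⟩ := Nat.exists_eq_add_of_le' hn
  obtain ⟨a, ha⟩ := hx
  obtain ⟨b, hb⟩ := hD
  obtain ⟨e₁, he₁⟩ := P.binomExpansion x (P.eval x - x)
  obtain ⟨e₂, he₂⟩ := P.binomExpansion x (P.eval (P.eval x) - x)
  simp only [add_sub_cancel] at he₁ he₂
  -- with `d = P x - x`, `D = P' x`, the difference is `d (D - 1) (D + 2)` plus multiples of `d ^ 2`
  rw [iterate_comp_X_eval]
  simp only [iterate_succ_apply', iterate_zero_apply]
  generalize P.eval (P.eval (P.eval x)) = y₃ at *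
  generalize P.eval (P.eval x) = y₂ at *
  generalize P.eval x = y₁ at *
  generalize P.derivative.eval x = D at *
  obtain rfl : y₁ = x + 3 ^ (m + 2) * a := by linear_combination ha
  obtain rfl : D = 1 + 3 * b := by linear_combination hb
  subst he₁ he₂
  exact ⟨a * b * (b + 1) + 3 ^ m * a ^ 2 * ((1 + 3 * b) * e₁ +
    e₂ * (2 + 3 * b + 3 ^ (m + 2) * e₁ * a) ^ 2), by ring⟩

end IterateComp

variable {p : ℕ} [Fact p.Prime]

open PadicInt

theorem dvd_derivative_iterate_comp_sub {P : ℤ_[p][X]} (hP : ∀ y, (p : ℤ_[p]) ∣ P.eval y - y)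
    (x : ℤ_[p]) :
    (p : ℤ_[p]) ∣ (P.comp^[p] X).derivative.eval x - P.derivative.eval x := by
  have hfix : Semiconj toZMod (P.eval ·) id := fun y => toZMod_eq_iff_dvd.2 (hP y)
  have hcongr (y : ℤ_[p]) (hy : toZMod y = toZMod x) :
      toZMod (P.derivative.eval y) = toZMod (P.derivative.eval x) :=
    toZMod_eq_iff_dvd.2 <| (toZMod_eq_iff_dvd.1 hy).trans (sub_dvd_eval_sub _ _ _)
  rw [← toZMod_eq_iff_dvd, derivative_iterate_comp_X_eval, map_prod,
    Finset.prod_congr rfl fun i _ => hcongr _ (((hfix.iterate_right i) x).trans (by simp)),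
    Finset.prod_const, Finset.card_range, ZMod.pow_card]

end Polynomial

section Reduction

variable {p : ℕ} [Fact p.Prime] (F : ℤ_[p][X])

open PadicInt

/-- The map `f_{/n}` induced by `F` on `ℤ/p^nℤ`. -/
noncomputable def reduceMod (n : ℕ) : ZMod (p ^ n) → ZMod (p ^ n) :=
  fun a => (F.map (toZModPow n)).eval a

theorem semiconj_reduceMod (n : ℕ) : Semiconj (toZModPow n) (F.eval ·) (reduceMod F n) :=
  fun x => by simp [reduceMod, eval_map, eval₂_at_apply]

theorem eq_reduceMod_of_semiconj {n : ℕ} {g : ZMod (p ^ n) → ZMod (p ^ n)}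
    (hg : ∀ x, g (toZModPow n x) = toZModPow n (F.eval x)) : g = reduceMod F n :=
  funext <| (ZMod.ringHom_surjective (toZModPow n)).forall.2 fun x =>
    (hg x).trans (semiconj_reduceMod F n x)

variable {F}

theorem isMinimal_reduceMod_iff {n : ℕ} :
    IsMinimal (reduceMod F n) ↔ ∀ x y, ∃ k, (p : ℤ_[p]) ^ n ∣ (F.eval ·)^[k] x - y := by
  simp only [isMinimal_iff_of_semiconj (ZMod.ringHom_surjective _) (semiconj_reduceMod F n),
    toZModPow_eq_iff_dvd]

theorem forall_dense_range_iterate_iff :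
    (∀ x, Dense (Set.range fun k : ℕ => (F.eval ·)^[k] x)) ↔ ∀ n, IsMinimal (reduceMod F n) := by
  simp only [isMinimal_reduceMod_iff, dense_iff_forall_dvd, Set.exists_range_iff]
  exact forall_comm

theorem IsMinimal.of_reduceMod_le {m n : ℕ} (h : IsMinimal (reduceMod F n)) (hmn : m ≤ n) :
    IsMinimal (reduceMod F m) :=
  isMinimal_reduceMod_iff.2 fun x y => (isMinimal_reduceMod_iff.1 h x y).imp fun _ =>
    (pow_dvd_pow _ hmn).trans

theorem isPeriodicPt_reduceMod_iff {n m : ℕ} {x : ℤ_[p]} :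
    IsPeriodicPt (reduceMod F n) m (toZModPow n x) ↔ (p : ℤ_[p]) ^ n ∣ (F.eval ·)^[m] x - x := by
  rw [IsPeriodicPt, IsFixedPt, ← ((semiconj_reduceMod F n).iterate_right m).eq,
    toZModPow_eq_iff_dvd]

theorem IsMinimal.pow_dvd_iterate_sub {n : ℕ} (h : IsMinimal (reduceMod F n)) (m : ℕ)
    (x : ℤ_[p]) : (p : ℤ_[p]) ^ n ∣ (F.eval ·)^[p ^ n * m] x - x := by
  rw [← isPeriodicPt_reduceMod_iff]
  have := (isPeriodicPt_minimalPeriod (reduceMod F n) (toZModPow n x)).mul_const m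
  rwa [h.minimalPeriod_eq, Nat.card_zmod] at this

theorem IsMinimal.not_pow_dvd_iterate_sub {n : ℕ} (h : IsMinimal (reduceMod F (n + 1)))
    (x : ℤ_[p]) : ¬ (p : ℤ_[p]) ^ (n + 1) ∣ (F.eval ·)^[p ^ n] x - x := by
  rw [← isPeriodicPt_reduceMod_iff]
  intro hx
  have := hx.minimalPeriod_le (pow_pos (Fact.out : p.Prime).pos n)
  rw [h.minimalPeriod_eq, Nat.card_zmod] at this
  exact (Nat.pow_lt_pow_succ (Fact.out : p.Prime).one_lt).not_ge this

theorem isMinimal_reduceMod_of_dvd_of_not_dvd {n : ℕ} {x : ℤ_[p]}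
    (hper : (p : ℤ_[p]) ^ (n + 1) ∣ (F.eval ·)^[p ^ (n + 1)] x - x)
    (hnot : ¬ (p : ℤ_[p]) ^ (n + 1) ∣ (F.eval ·)^[p ^ n] x - x) :
    IsMinimal (reduceMod F (n + 1)) := by
  rw [← isPeriodicPt_reduceMod_iff] at hper hnot
  exact isMinimal_of_minimalPeriod_eq ((minimalPeriod_eq_prime_pow hnot hper).trans
    (Nat.card_zmod _).symm)

end Reduction

section Derivative

variable {p : ℕ} [Fact p.Prime] {F : ℤ_[p][X]}

open PadicInt

theorem IsMinimal.pow_dvd_iterate_comp_X_sub {n : ℕ} (h : IsMinimal (reduceMod F n)) (m : ℕ)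
    (x : ℤ_[p]) : (p : ℤ_[p]) ^ n ∣ (F.comp^[p ^ n * m] X).eval x - x := by
  rw [iterate_comp_X_eval]
  exact h.pow_dvd_iterate_sub m x

theorem IsMinimal.dvd_derivative_iterate_comp_prime_sub_one (h : IsMinimal (reduceMod F 3))
    (z : ℤ_[p]) : (p : ℤ_[p]) ∣ (F.comp^[p] X).derivative.eval z - 1 := by
  set P := F.comp^[p] X
  set Q := P.comp^[p] X
  have hQ : Q = F.comp^[p ^ 2 * 1] X := by rw [mul_one, sq, iterate_comp_X_mul]
  have hP : ∀ y, (p : ℤ_[p]) ∣ P.eval y - y := by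
    simpa only [pow_one, mul_one] using
      (h.of_reduceMod_le (by norm_num : 1 ≤ 3)).pow_dvd_iterate_comp_X_sub 1
  by_contra hD
  have hunit : IsUnit (Q.derivative.eval z - 1) := by
    rw [← not_not (a := IsUnit _), not_isUnit_iff, norm_lt_one_iff_dvd]
    intro hQD
    have := dvd_sub hQD (dvd_derivative_iterate_comp_sub hP z)
    rw [sub_sub_sub_cancel_left] at this
    exact hD this
  obtain ⟨a, ha⟩ := hQ ▸ (h.of_reduceMod_le (by norm_num : 2 ≤ 3)).pow_dvd_iterate_comp_X_sub 1 z
  obtain ⟨u, hu⟩ : _ ∣ -a := hunit.dvd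
  -- `u` is chosen so that `w` is fixed by `f^[p ^ 2]` modulo `p ^ 3`
  set w := z + (p : ℤ_[p]) ^ 2 * u
  obtain ⟨e, he⟩ := Q.binomExpansion z ((p : ℤ_[p]) ^ 2 * u)
  apply h.not_pow_dvd_iterate_sub (n := 2) w
  rw [← iterate_comp_X_eval, ← mul_one (p ^ 2), ← hQ]
  refine ⟨p * e * u ^ 2, ?_⟩
  linear_combination he + ha - (p : ℤ_[p]) ^ 2 * hu

theorem IsMinimal.dvd_derivative_iterate_comp_prime_pow_sub_one (h : IsMinimal (reduceMod F 3))
    (k : ℕ) (z : ℤ_[p]) :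
    (p : ℤ_[p]) ∣ (F.comp^[p ^ (k + 1)] X).derivative.eval z - 1 := by
  induction k generalizing z with
  | zero => simpa using h.dvd_derivative_iterate_comp_prime_sub_one z
  | succ k ih =>
    have hP : ∀ y, (p : ℤ_[p]) ∣ (F.comp^[p ^ (k + 1)] X).eval y - y := by
      simpa only [pow_one, ← pow_succ'] using
        (h.of_reduceMod_le (by norm_num : 1 ≤ 3)).pow_dvd_iterate_comp_X_sub (p ^ k)
    rw [pow_succ _ (k + 1), iterate_comp_X_mul, ← sub_add_sub_cancel _
      ((F.comp^[p ^ (k + 1)] X).derivative.eval z)]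
    exact dvd_add (dvd_derivative_iterate_comp_sub hP z) (ih z)

end Derivative

theorem IsMinimal.reduceMod_add_two {F : ℤ_[3][X]} {n : ℕ} (hn : 2 ≤ n)
    (h : IsMinimal (reduceMod F (n + 1))) : IsMinimal (reduceMod F (n + 2)) := by
  obtain ⟨m, rfl⟩ := Nat.exists_eq_add_of_le' hn
  have h3 := h.of_reduceMod_le (by omega : 3 ≤ m + 2 + 1)
  set P := F.comp^[3 ^ (m + 2)] X
  set Q := P.comp^[3] X
  have hQ : F.comp^[3 ^ (m + 3)] X = Q := by rw [pow_succ, iterate_comp_X_mul]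
  have hR : F.comp^[3 ^ (m + 4)] X = Q.comp^[3] X := by
    rw [pow_succ, iterate_comp_X_mul, hQ]
  have hPper : (3 : ℤ_[3]) ^ (m + 2) ∣ P.eval 0 - 0 := by
    simpa only [mul_one, Nat.cast_ofNat] using
      (h.of_reduceMod_le (by omega)).pow_dvd_iterate_comp_X_sub 1 0
  have hQper : (3 : ℤ_[3]) ^ (m + 3) ∣ Q.eval 0 - 0 := by
    simpa only [mul_one, Nat.cast_ofNat, hQ] using h.pow_dvd_iterate_comp_X_sub 1 0
  have hPnot : ¬ (3 : ℤ_[3]) ^ (m + 3) ∣ P.eval 0 - 0 := by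
    simpa only [← iterate_comp_X_eval, Nat.cast_ofNat] using h.not_pow_dvd_iterate_sub 0
  have hPD : (3 : ℤ_[3]) ∣ P.derivative.eval 0 - 1 := by
    simpa only [Nat.cast_ofNat] using h3.dvd_derivative_iterate_comp_prime_pow_sub_one (m + 1) 0
  have hQD : (3 : ℤ_[3]) ∣ Q.derivative.eval 0 - 1 := by
    simpa only [Nat.cast_ofNat, hQ] using
      h3.dvd_derivative_iterate_comp_prime_pow_sub_one (m + 2) 0
  have hliftP := three_pow_add_two_dvd_iterate_comp_three_sub (by omega) hPper hPD
  have hliftQ := three_pow_add_two_dvd_iterate_comp_three_sub (by omega) hQper hQD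
  refine isMinimal_reduceMod_of_dvd_of_not_dvd (n := m + 2 + 1) (x := 0) ?_ ?_
  · simp only [← iterate_comp_X_eval, Nat.cast_ofNat]
    rw [hR, ← sub_add_cancel (_ - _) (3 * (Q.eval 0 - 0))]
    exact dvd_add ((pow_dvd_pow 3 (by omega)).trans hliftQ) (pow_succ' (3 : ℤ_[3]) _ ▸
      mul_dvd_mul_left 3 hQper)
  · simp only [← iterate_comp_X_eval, Nat.cast_ofNat, hQ]
    intro hQ3
    have := dvd_sub hQ3 hliftP
    rw [sub_sub_cancel, pow_succ', mul_dvd_mul_iff_left (by norm_num : (3 : ℤ_[3]) ≠ 0)] at this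
    exact hPnot this

theorem isMinimal_reduceMod_of_three {F : ℤ_[3][X]} (h : IsMinimal (reduceMod F 3)) (n : ℕ) :
    IsMinimal (reduceMod F n) := by
  have hfrom3 (m : ℕ) : IsMinimal (reduceMod F (m + 3)) := by
    induction m with
    | zero => exact h
    | succ m ih => exact ih.reduceMod_add_two (n := m + 2) (by omega)
  rcases le_or_gt n 3 with hn | hn
  · exact h.of_reduceMod_le hn
  · obtain ⟨m, rfl⟩ := Nat.exists_eq_add_of_le' hn.le
    exact hfrom3 m

theorem stmt13 (F : Polynomial ℤ_[3]) :
    (∀ x : ℤ_[3], Dense (Set.range fun k : ℕ => (fun t => F.eval t)^[k] x)) ↔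
      ∀ g : ZMod (3 ^ 3) → ZMod (3 ^ 3),
        (∀ x : ℤ_[3], g (PadicInt.toZModPow 3 x) = PadicInt.toZModPow 3 (F.eval x)) →
          ∀ a : ZMod (3 ^ 3), Set.range (fun k : ℕ => g^[k] a) = Set.univ := by
  rw [forall_dense_range_iterate_iff]
  constructor
  · rintro h g hg
    rw [eq_reduceMod_of_semiconj F hg]
    exact h 3
  · intro h n
    exact isMinimal_reduceMod_of_three (h _ fun x => (semiconj_reduceMod F 3 x).symm) n
end

section
/- Let p ≥ 5 be prime and f a polynomial with coefficients in ℤ_p. Then (ℤ_p, f) is minimal if and only if the induced map f_{/2} on ℤ/p²ℤ is minimal (has a full cycle of length p²). -/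
/-!
Minimality on `ℤ_[p]` is equivalent to minimality of `F` modulo `p ^ n` for every `n`, since the
balls `x + p ^ n ℤ_[p]` form a basis of the topology.

Minimality modulo `p ^ 2` makes every orbit modulo `p` a `p`-cycle and forbids `F^[p]` from
fixing any point modulo `p ^ 2`. Hence `F^[p] y = y + p b` with `b` a unit, and
`(F^[p])'(y) ≡ 1 (mod p)`: otherwise `F^[p]` would fix some `y + p t` modulo `p ^ 2`, by a second
order Taylor expansion of `F^[p]` at `y`.

These two conditions pass from `p ^ n` to `p ^ (n + 1)`. Expanding `F^[p ^ n * j] y` to second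
order in the displacement, the displacement after `p` rounds is `p b` up to multiples of
`∑ i < p, i` and `∑ i < p, i ^ 2`, which vanish modulo `p` once `p ≥ 5`. The period of every point
modulo `p ^ (n + 1)` then divides `p ^ (n + 1)` but not `p ^ n`, so every orbit modulo
`p ^ (n + 1)` runs through all residues.
-/

open Polynomial Function

namespace Function

variable {α : Type*} [Fintype α] {f : α → α}

theorem minimalPeriod_eq_card_of_forall_range_iterate_eq_univ
    (h : ∀ a, Set.range (f^[·] a) = Set.univ) (x : α) : minimalPeriod f x = Fintype.card α := by
  classical
  have hx : x ∈ periodicPts f := by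
    obtain ⟨k, hk⟩ : x ∈ Set.range (f^[·] (f x)) := h (f x) ▸ Set.mem_univ x
    exact mk_mem_periodicPts k.succ_pos (by rwa [IsPeriodicPt, IsFixedPt, iterate_succ_apply])
  refine le_antisymm minimalPeriod_le_card ?_
  have hcover : Finset.univ ⊆ (Finset.range (minimalPeriod f x)).image (f^[·] x) := by
    intro b _
    obtain ⟨k, rfl⟩ : b ∈ Set.range (f^[·] x) := h x ▸ Set.mem_univ b
    exact Finset.mem_image.2 ⟨k % minimalPeriod f x,
      Finset.mem_range.2 (Nat.mod_lt _ (minimalPeriod_pos_of_mem_periodicPts hx)),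
      iterate_mod_minimalPeriod_eq⟩
  simpa using (Finset.card_le_card hcover).trans Finset.card_image_le

theorem range_iterate_eq_univ_of_minimalPeriod_eq_card {x : α}
    (h : minimalPeriod f x = Fintype.card α) : Set.range (f^[·] x) = Set.univ := by
  have hinj : Injective fun k : Fin (Fintype.card α) => f^[k] x := fun i j hij =>
    Fin.ext (iterate_injOn_Iio_minimalPeriod (by simp [h]) (by simp [h]) hij)
  have hsurj := ((Fintype.bijective_iff_injective_and_card _).2 ⟨hinj, by simp⟩).surjective
  exact Set.eq_univ_of_forall fun b => let ⟨k, hk⟩ := hsurj b; ⟨k, hk⟩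

end Function

namespace Polynomial

theorem semiconj_eval_map {R S : Type*} [Semiring R] [Semiring S] (φ : R →+* S) (F : R[X]) :
    Semiconj φ F.eval (F.map φ).eval := fun x => (eval_map_apply φ x).symm

variable {R : Type*} [CommRing R]

theorem exists_eval_add_eq_taylor_two (F : R[X]) (z u : R) :
    ∃ e, F.eval (z + u) =
      F.eval z + F.derivative.eval z * u + (hasseDeriv 2 F).eval z * u ^ 2 + u ^ 3 * e := by
  set T := taylor z F
  obtain ⟨E, hE⟩ : X ^ 3 ∣ T - (C (T.coeff 0) + C (T.coeff 1) * X + C (T.coeff 2) * X ^ 2) := by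
    rw [X_pow_dvd_iff]
    intro d hd
    interval_cases d <;> simp [coeff_C, coeff_X_pow]
  refine ⟨E.eval u, ?_⟩
  have hu := congrArg (eval u) hE
  simp only [eval_sub, eval_add, eval_mul, eval_pow, eval_C, eval_X, taylor_coeff, T,
    hasseDeriv_zero', hasseDeriv_one'] at hu
  rw [add_comm, ← taylor_eval]
  linear_combination hu

/-- The derivative of `F^[m]` at `y`, by the chain rule. -/
noncomputable def iterateDeriv (F : R[X]) (m : ℕ) (y : R) : R :=
  ∏ i ∈ Finset.range m, F.derivative.eval (F.eval^[i] y)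

theorem iterateDeriv_add (F : R[X]) (m₁ m₂ : ℕ) (y : R) :
    iterateDeriv F (m₁ + m₂) y = iterateDeriv F m₁ y * iterateDeriv F m₂ (F.eval^[m₁] y) := by
  simp only [iterateDeriv, Finset.prod_range_add, ← iterate_add_apply, add_comm]

theorem iterateDeriv_succ (F : R[X]) (m : ℕ) (y : R) :
    iterateDeriv F (m + 1) y = iterateDeriv F m y * F.derivative.eval (F.eval^[m] y) :=
  Finset.prod_range_succ _ _

theorem exists_iterate_eval_add (F : R[X]) (m : ℕ) (y : R) :
    ∃ q, ∀ s, ∃ e, F.eval^[m] (y + s) =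
      F.eval^[m] y + s * iterateDeriv F m y + s ^ 2 * q + s ^ 3 * e := by
  induction m with
  | zero => exact ⟨0, fun s => ⟨0, by simp [iterateDeriv]⟩⟩
  | succ m ih =>
    obtain ⟨q, hq⟩ := ih
    set z := F.eval^[m] y
    set D := iterateDeriv F m y
    refine ⟨q * F.derivative.eval z + D ^ 2 * (hasseDeriv 2 F).eval z, fun s => ?_⟩
    obtain ⟨e, he⟩ := hq s
    obtain ⟨k, hk⟩ := exists_eval_add_eq_taylor_two F z (s * D + s ^ 2 * q + s ^ 3 * e)
    refine ⟨e * F.derivative.eval z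
      + (2 * D * q + s * (q ^ 2 + 2 * D * e) + 2 * s ^ 2 * q * e + s ^ 3 * e ^ 2)
        * (hasseDeriv 2 F).eval z + (D + s * q + s ^ 2 * e) ^ 3 * k, ?_⟩
    rw [iterate_succ_apply', iterate_succ_apply', he, iterateDeriv_succ,
      show z + s * D + s ^ 2 * q + s ^ 3 * e = z + (s * D + s ^ 2 * q + s ^ 3 * e) by ring, hk]
    ring

theorem dvd_iterateDeriv_mul_sub_one (F : R[X]) {π : R} {N : ℕ}
    (h : ∀ z, π ∣ iterateDeriv F N z - 1) (j : ℕ) (y : R) :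
    π ∣ iterateDeriv F (N * j) y - 1 := by
  induction j with
  | zero => simp [iterateDeriv]
  | succ j ih =>
    rw [Nat.mul_succ, iterateDeriv_add]
    set A := iterateDeriv F (N * j) y
    set B := iterateDeriv F N (F.eval^[N * j] y)
    have hAB : A * B - 1 = (A - 1) * B + (B - 1) := by ring
    rw [hAB]
    exact dvd_add (dvd_mul_of_dvd_left ih B) (h _)

theorem exists_iterate_mul_eval_eq (F : R[X]) (π : R) {N r : ℕ} {y c a q : R}
    (hc : F.eval^[N] y = y + π ^ (r + 1) * c) (ha : iterateDeriv F N y = 1 + π * a)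
    (hq : ∀ s, ∃ e, F.eval^[N] (y + s) =
      F.eval^[N] y + s * iterateDeriv F N y + s ^ 2 * q + s ^ 3 * e) (j : ℕ) :
    ∃ w, F.eval^[N * j] y = y + π ^ (r + 1) * (j * c + π * (a * c * ∑ i ∈ Finset.range j, (i : R)
      + π ^ r * q * c ^ 2 * ∑ i ∈ Finset.range j, (i : R) ^ 2)) + π ^ (r + 3) * w := by
  induction j with
  | zero => exact ⟨0, by simp⟩
  | succ j ih =>
    obtain ⟨w, hw⟩ := ih
    set G := ∑ i ∈ Finset.range j, (i : R)
    set H := ∑ i ∈ Finset.range j, (i : R) ^ 2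
    set u := a * c * G + π ^ r * q * c ^ 2 * H + π * w
    set t := (j : R) * c + π * u
    obtain ⟨e, he⟩ := hq (π ^ (r + 1) * t)
    refine ⟨w + a * u + π ^ r * q * (2 * j * c * u + π * u ^ 2) + π ^ (2 * r) * t ^ 3 * e, ?_⟩
    have hj : F.eval^[N * j] y = y + π ^ (r + 1) * t := by rw [hw]; ring
    rw [Nat.mul_succ, add_comm, iterate_add_apply, hj, he, hc, ha, Finset.sum_range_succ,
      Finset.sum_range_succ]
    push_cast
    ring

end Polynomial

theorem Nat.Prime.dvd_sum_range_pow {p : ℕ} (hp : p.Prime) {k : ℕ} (hk : k < p - 1) :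
    p ∣ ∑ i ∈ Finset.range p, i ^ k := by
  have := Fact.mk hp
  rw [← ZMod.natCast_eq_zero_iff]
  push_cast
  rw [← FiniteField.sum_pow_lt_card_sub_one (K := ZMod p) k (by rwa [ZMod.card])]
  refine Finset.sum_nbij' Nat.cast ZMod.val (by simp) (by simp [ZMod.val_lt])
    (fun i hi => ?_) (by simp) (by simp)
  simp [ZMod.val_cast_of_lt (Finset.mem_range.1 hi)]

namespace PadicInt

variable {p : ℕ} [hp : Fact p.Prime]

theorem isUnit_of_not_dvd {z : ℤ_[p]} (h : ¬ (p : ℤ_[p]) ∣ z) : IsUnit z := by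
  rwa [← not_not (a := IsUnit z), not_isUnit_iff, norm_lt_one_iff_dvd]

theorem toZModPow_eq_iff_pow_dvd_sub (n : ℕ) (a b : ℤ_[p]) :
    toZModPow n a = toZModPow n b ↔ (p : ℤ_[p]) ^ n ∣ a - b := by
  rw [← sub_eq_zero, ← map_sub, ← RingHom.mem_ker, ker_toZModPow, Ideal.mem_span_singleton]

/-- Minimality of the map induced by `f` on `ℤ/p^nℤ`, stated upstairs in `ℤ_[p]`. -/
def IsMinimalMod (f : ℤ_[p] → ℤ_[p]) (n : ℕ) : Prop :=
  ∀ x z : ℤ_[p], ∃ k, (p : ℤ_[p]) ^ n ∣ f^[k] x - z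

theorem IsMinimalMod.mono {f : ℤ_[p] → ℤ_[p]} {m n : ℕ} (h : IsMinimalMod f n) (hmn : m ≤ n) :
    IsMinimalMod f m := fun x z =>
  let ⟨k, hk⟩ := h x z
  ⟨k, (pow_dvd_pow _ hmn).trans hk⟩

theorem dense_range_iterate_iff_forall_isMinimalMod (f : ℤ_[p] → ℤ_[p]) :
    (∀ x, Dense (Set.range (f^[·] x))) ↔ ∀ n, IsMinimalMod f n := by
  have hp0 : (0 : ℝ) < p := Nat.cast_pos.2 hp.out.pos
  constructor
  · intro h n x z
    obtain ⟨_, hball, k, rfl⟩ := Metric.dense_iff.1 (h x) z _ (zpow_pos hp0 (-n))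
    rw [Metric.mem_ball, dist_eq_norm] at hball
    exact ⟨k, Ideal.mem_span_singleton.1 ((norm_le_pow_iff_mem_span_pow _ n).1 hball.le)⟩
  · intro h x
    refine Metric.dense_iff.2 fun z r hr => ?_
    obtain ⟨n, hn⟩ := exists_pow_neg_lt p hr
    obtain ⟨k, hk⟩ := h n x z
    refine ⟨f^[k] x, ?_, k, rfl⟩
    rw [Metric.mem_ball, dist_eq_norm]
    exact ((norm_le_pow_iff_mem_span_pow _ n).2 (Ideal.mem_span_singleton.2 hk)).trans_lt hn

section Reduction

variable {f : ℤ_[p] → ℤ_[p]} {n : ℕ} {g : ZMod (p ^ n) → ZMod (p ^ n)}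

theorem isMinimalMod_iff_forall_range_iterate_eq_univ (hg : Semiconj (toZModPow n) f g) :
    IsMinimalMod f n ↔ ∀ a, Set.range (g^[·] a) = Set.univ := by
  simp only [IsMinimalMod, Set.eq_univ_iff_forall, Set.mem_range,
    (ZMod.ringHom_surjective (toZModPow n)).forall, ← (hg.iterate_right _).eq,
    toZModPow_eq_iff_pow_dvd_sub]

theorem isPeriodicPt_toZModPow_iff (hg : Semiconj (toZModPow n) f g) (m : ℕ) (x : ℤ_[p]) :
    IsPeriodicPt g m (toZModPow n x) ↔ (p : ℤ_[p]) ^ n ∣ f^[m] x - x := by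
  rw [IsPeriodicPt, IsFixedPt, ← (hg.iterate_right m).eq, toZModPow_eq_iff_pow_dvd_sub]

theorem IsMinimalMod.pow_dvd_iterate_sub_iff (hg : Semiconj (toZModPow n) f g)
    (hf : IsMinimalMod f n) (m : ℕ) (x : ℤ_[p]) :
    (p : ℤ_[p]) ^ n ∣ f^[m] x - x ↔ p ^ n ∣ m := by
  rw [← isPeriodicPt_toZModPow_iff hg, isPeriodicPt_iff_minimalPeriod_dvd,
    minimalPeriod_eq_card_of_forall_range_iterate_eq_univ
      ((isMinimalMod_iff_forall_range_iterate_eq_univ hg).1 hf), ZMod.card]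

end Reduction

theorem isMinimalMod_succ_of_pow_dvd_iterate_sub {f : ℤ_[p] → ℤ_[p]} {n : ℕ}
    {g : ZMod (p ^ (n + 1)) → ZMod (p ^ (n + 1))} (hg : Semiconj (toZModPow (n + 1)) f g)
    (hper : ∀ x, (p : ℤ_[p]) ^ (n + 1) ∣ f^[p ^ (n + 1)] x - x)
    (hnot : ∀ x, ¬ (p : ℤ_[p]) ^ (n + 1) ∣ f^[p ^ n] x - x) : IsMinimalMod f (n + 1) := by
  rw [isMinimalMod_iff_forall_range_iterate_eq_univ hg,
    (ZMod.ringHom_surjective (toZModPow (n + 1))).forall]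
  intro x
  apply range_iterate_eq_univ_of_minimalPeriod_eq_card
  rw [ZMod.card]
  obtain ⟨i, hi, hperiod⟩ := (Nat.dvd_prime_pow hp.out).1
    ((isPeriodicPt_toZModPow_iff hg _ x).2 (hper x)).minimalPeriod_dvd
  rcases hi.lt_or_eq with hlt | rfl
  · refine absurd ((isPeriodicPt_toZModPow_iff hg _ x).1 ?_) (hnot x)
    exact isPeriodicPt_iff_minimalPeriod_dvd.2 (hperiod ▸ pow_dvd_pow p (by omega))
  · exact hperiod

/-- The condition under which every `p ^ n`-cycle of `F` lifts to a single `p ^ (n + 1)`-cycle,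
which again satisfies it (for `p ≥ 5`). -/
def CycleGrows (F : ℤ_[p][X]) (n : ℕ) : Prop :=
  ∀ y, (p : ℤ_[p]) ∣ iterateDeriv F (p ^ n) y - 1 ∧
    ∃ b, ¬ (p : ℤ_[p]) ∣ b ∧ F.eval^[p ^ n] y = y + p ^ n * b

variable {F : ℤ_[p][X]}

theorem cycleGrows_one (hF : IsMinimalMod F.eval 2) : CycleGrows F 1 := by
  have hsc (n : ℕ) := semiconj_eval_map (toZModPow n) F
  have hdisp (z : ℤ_[p]) : ¬ (p : ℤ_[p]) ^ 2 ∣ F.eval^[p] z - z := by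
    rw [hF.pow_dvd_iterate_sub_iff (hsc 2)]
    exact fun h => (Nat.pow_lt_pow_right hp.out.one_lt one_lt_two).not_ge
      (by simpa using Nat.le_of_dvd hp.out.pos h)
  intro y
  obtain ⟨b, hb⟩ := ((hF.mono one_le_two).pow_dvd_iterate_sub_iff (hsc 1) p y).2 (by simp)
  have hFy : F.eval^[p] y = y + p * b := by linear_combination hb
  refine ⟨?_, b, fun ⟨c, hc⟩ => hdisp y ⟨c, by rw [hFy, hc]; ring⟩, by simpa using hFy⟩
  -- otherwise `1 - (F^[p])'(y)` is a unit and `F^[p]` fixes some `y + p t` modulo `p ^ 2`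
  rw [pow_one]
  by_contra hA
  obtain ⟨v, hv⟩ := (isUnit_of_not_dvd (dvd_sub_comm.not.1 hA)).exists_right_inv
  obtain ⟨q, hq⟩ := exists_iterate_eval_add F p y
  obtain ⟨e, he⟩ := hq (p * (b * v))
  exact hdisp (y + p * (b * v))
    ⟨(b * v) ^ 2 * q + p * (b * v) ^ 3 * e, by rw [he, hFy]; linear_combination (-(p * b)) * hv⟩

theorem CycleGrows.not_pow_succ_dvd {n : ℕ} (h : CycleGrows F n) (y : ℤ_[p]) :
    ¬ (p : ℤ_[p]) ^ (n + 1) ∣ F.eval^[p ^ n] y - y := by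
  obtain ⟨-, b, hb, hFy⟩ := h y
  rintro ⟨c, hc⟩
  refine hb ⟨c, mul_left_cancel₀ (pow_ne_zero n (Nat.cast_ne_zero.2 hp.out.ne_zero)) ?_⟩
  linear_combination hc - hFy

theorem CycleGrows.succ (hp5 : 5 ≤ p) {n : ℕ} (h : CycleGrows F (n + 1)) :
    CycleGrows F (n + 2) := by
  intro y
  refine ⟨by rw [pow_succ]; exact dvd_iterateDeriv_mul_sub_one F (fun z => (h z).1) p y, ?_⟩
  obtain ⟨⟨a, ha⟩, b, hb, hFy⟩ := h y
  obtain ⟨q, hq⟩ := exists_iterate_eval_add F (p ^ (n + 1)) y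
  obtain ⟨w, hw⟩ := exists_iterate_mul_eval_eq F p hFy (sub_eq_iff_eq_add'.1 ha) hq p
  have hsum (k : ℕ) (hk : k < p - 1) : (p : ℤ_[p]) ∣ ∑ i ∈ Finset.range p, (i : ℤ_[p]) ^ k := by
    exact_mod_cast Nat.cast_dvd_cast (α := ℤ_[p]) (hp.out.dvd_sum_range_pow hk)
  obtain ⟨g₁, hg₁⟩ := hsum 1 (by omega)
  obtain ⟨g₂, hg₂⟩ := hsum 2 (by omega)
  simp only [pow_one] at hg₁
  refine ⟨b + p * (a * b * g₁ + p ^ n * q * b ^ 2 * g₂ + w), ?_, ?_⟩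
  · rwa [dvd_add_left (dvd_mul_right _ _)]
  · rw [pow_succ p (n + 1), hw, hg₁, hg₂]
    ring

theorem isMinimalMod_of_isMinimalMod_two (hp5 : 5 ≤ p) (hF : IsMinimalMod F.eval 2) (n : ℕ) :
    IsMinimalMod F.eval n := by
  have hgrow (k : ℕ) : CycleGrows F (k + 1) := by
    induction k with
    | zero => exact cycleGrows_one hF
    | succ k ih => exact ih.succ hp5
  refine (isMinimalMod_succ_of_pow_dvd_iterate_sub (semiconj_eval_map _ F) (fun x => ?_)
    (hgrow n).not_pow_succ_dvd).mono (show n ≤ n + 1 + 1 by omega)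
  obtain ⟨-, b, -, hb⟩ := hgrow (n + 1) x
  exact ⟨b, by rw [hb]; ring⟩

end PadicInt

theorem stmt15 (p : ℕ) [Fact p.Prime] (hp5 : 5 ≤ p) (F : Polynomial ℤ_[p]) :
    (∀ x : ℤ_[p], Dense (Set.range fun k : ℕ => (fun t => F.eval t)^[k] x)) ↔
      ∀ g : ZMod (p ^ 2) → ZMod (p ^ 2),
        (∀ x : ℤ_[p], g (PadicInt.toZModPow 2 x) = PadicInt.toZModPow 2 (F.eval x)) →
          ∀ a : ZMod (p ^ 2), Set.range (fun k : ℕ => g^[k] a) = Set.univ := by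
  rw [PadicInt.dense_range_iterate_iff_forall_isMinimalMod]
  have hsc := semiconj_eval_map (PadicInt.toZModPow 2) F
  constructor
  · intro hF g hg
    exact (PadicInt.isMinimalMod_iff_forall_range_iterate_eq_univ fun x => (hg x).symm).1 (hF 2)
  · intro hg
    exact PadicInt.isMinimalMod_of_isMinimalMod_two hp5
      ((PadicInt.isMinimalMod_iff_forall_range_iterate_eq_univ hsc).2 (hg _ fun x => (hsc x).symm))
end

section
/- Let f(x) = 1 + 3x + 2x³ as a polynomial over ℤ_2. Then the induced map on ℤ/4ℤ has a full cycle (0 → 1 → 2 → 3 → 0), but (ℤ_2, f) is not minimal; indeed the induced map on ℤ/8ℤ has the cycle 0 → 1 → 6 → 3 → 0 of length 4 < 8. -/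
theorem stmt16 :
    (∀ g : ZMod (2 ^ 2) → ZMod (2 ^ 2),
        (∀ x : ℤ_[2], g (PadicInt.toZModPow 2 x) =
            PadicInt.toZModPow 2 (1 + 3 * x + 2 * x ^ 3)) →
          g 0 = 1 ∧ g 1 = 2 ∧ g 2 = 3 ∧ g 3 = 0) ∧
    (∀ g : ZMod (2 ^ 3) → ZMod (2 ^ 3),
        (∀ x : ℤ_[2], g (PadicInt.toZModPow 3 x) =
            PadicInt.toZModPow 3 (1 + 3 * x + 2 * x ^ 3)) →
          g 0 = 1 ∧ g 1 = 6 ∧ g 6 = 3 ∧ g 3 = 0) ∧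
    ¬ (∀ x : ℤ_[2],
        Dense (Set.range fun k : ℕ => (fun t : ℤ_[2] => 1 + 3 * t + 2 * t ^ 3)^[k] x)) := by
  refine ⟨?_, ?_, ?_⟩
  · intro g h
    have h0 := h 0; have h1 := h 1; have h2 := h 2; have h3 := h 3
    simp only [map_zero, map_one, map_add, map_mul, map_pow, map_ofNat] at h0 h1 h2 h3
    refine ⟨by rw [h0]; decide, by rw [h1]; decide, by rw [h2]; decide, by rw [h3]; decide⟩
  · intro g h
    have h0 := h 0; have h1 := h 1; have h6 := h 6; have h3 := h 3
    simp only [map_zero, map_one, map_add, map_mul, map_pow, map_ofNat] at h0 h1 h6 h3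
    refine ⟨by rw [h0]; decide, by rw [h1]; decide, by rw [h6]; decide, by rw [h3]; decide⟩
  · intro h
    set f : ℤ_[2] → ℤ_[2] := fun t => 1 + 3 * t + 2 * t ^ 3 with hf
    have key : ∀ k : ℕ, PadicInt.toZModPow 3 (f^[k] 0) = 0 ∨
        PadicInt.toZModPow 3 (f^[k] 0) = 1 ∨
        PadicInt.toZModPow 3 (f^[k] 0) = 3 ∨
        PadicInt.toZModPow 3 (f^[k] 0) = 6 := by
      intro k
      induction k with
      | zero => simp
      | succ n ih =>
        rw [Function.iterate_succ_apply']
        have step : PadicInt.toZModPow 3 (f (f^[n] 0)) =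
            1 + 3 * PadicInt.toZModPow 3 (f^[n] 0) +
              2 * (PadicInt.toZModPow 3 (f^[n] 0)) ^ 3 := by
          simp only [hf, map_add, map_mul, map_pow, map_one, map_ofNat]
        rw [step]
        rcases ih with h' | h' | h' | h' <;> rw [h'] <;> decide
    have hd := h 0
    have h2 : (2 : ℤ_[2]) ∈ closure (Set.range fun k : ℕ => f^[k] (0 : ℤ_[2])) :=
      hd.closure_eq ▸ Set.mem_univ _
    rw [Metric.mem_closure_iff] at h2
    obtain ⟨y, hy, hdist⟩ := h2 ((2 : ℝ) ^ (-3 : ℤ)) (by positivity)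
    obtain ⟨k, rfl⟩ := hy
    have hnorm : ‖(2 : ℤ_[2]) - f^[k] 0‖ ≤ (2 : ℝ) ^ (-3 : ℤ) := by
      rw [← dist_eq_norm]; exact hdist.le
    rw [show ((2:ℝ) ^ (-3:ℤ)) = ((2:ℕ):ℝ) ^ (-(3:ℕ):ℤ) by norm_num,
      PadicInt.norm_le_pow_iff_mem_span_pow] at hnorm
    rw [← PadicInt.ker_toZModPow, RingHom.mem_ker, map_sub, sub_eq_zero] at hnorm
    have h2' : PadicInt.toZModPow 3 ((2 : ℤ_[2])) = 2 := map_ofNat _ 2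
    rw [h2'] at hnorm
    rcases key k with h' | h' | h' | h' <;> rw [h'] at hnorm <;> exact absurd hnorm (by decide)
end

section
/- Let f(x) = 1 + 4x + 4x³ + 2x⁵ as a polynomial over ℤ_3. Then the induced map on ℤ/9ℤ has a full cycle of length 9, but the induced map on ℤ/27ℤ has a cycle of length 9 (namely 0, 1, 11, 15, 7, 23, 3, 13, 17), hence (ℤ_3, f) is not minimal. -/
private lemma hom_poly {n : ℕ} (x : ℤ_[3]) :
    PadicInt.toZModPow n (1 + 4 * x + 4 * x ^ 3 + 2 * x ^ 5) =
      1 + 4 * (PadicInt.toZModPow n x) + 4 * (PadicInt.toZModPow n x) ^ 3 +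
        2 * (PadicInt.toZModPow n x) ^ 5 := by
  simp [map_add, map_mul, map_pow, map_one, map_ofNat]

private lemma g_eq {n : ℕ} [NeZero (3 ^ n)] (g : ZMod (3 ^ n) → ZMod (3 ^ n))
    (hg : ∀ x : ℤ_[3], g (PadicInt.toZModPow n x) =
        PadicInt.toZModPow n (1 + 4 * x + 4 * x ^ 3 + 2 * x ^ 5)) :
    g = fun a => 1 + 4 * a + 4 * a ^ 3 + 2 * a ^ 5 := by
  funext a
  have h1 : PadicInt.toZModPow n ((a.val : ℤ_[3])) = a := by
    have : PadicInt.toZModPow n ((a.val : ℤ_[3])) = ((a.val : ℕ) : ZMod (3 ^ n)) := by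
      simp [map_natCast]
    rw [this, ZMod.natCast_rightInverse a]
  have := hg ((a.val : ℤ_[3]))
  rw [h1, hom_poly, h1] at this
  exact this

theorem stmt17 :
    (∀ g : ZMod (3 ^ 2) → ZMod (3 ^ 2),
        (∀ x : ℤ_[3], g (PadicInt.toZModPow 2 x) =
            PadicInt.toZModPow 2 (1 + 4 * x + 4 * x ^ 3 + 2 * x ^ 5)) →
          ∀ a : ZMod (3 ^ 2), Set.range (fun k : ℕ => g^[k] a) = Set.univ) ∧
    (∀ g : ZMod (3 ^ 3) → ZMod (3 ^ 3),
        (∀ x : ℤ_[3], g (PadicInt.toZModPow 3 x) =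
            PadicInt.toZModPow 3 (1 + 4 * x + 4 * x ^ 3 + 2 * x ^ 5)) →
          g 0 = 1 ∧ g 1 = 11 ∧ g 11 = 15 ∧ g 15 = 7 ∧ g 7 = 23 ∧ g 23 = 3 ∧
            g 3 = 13 ∧ g 13 = 17 ∧ g 17 = 0) ∧
    ¬ (∀ x : ℤ_[3],
        Dense (Set.range fun k : ℕ =>
          (fun t : ℤ_[3] => 1 + 4 * t + 4 * t ^ 3 + 2 * t ^ 5)^[k] x)) := by
  refine ⟨?_, ?_, ?_⟩
  · intro g hg a
    rw [g_eq g hg]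
    rw [Set.eq_univ_iff_forall]
    intro b
    have key : ∀ a b : ZMod (3 ^ 2), ∃ k ∈ Finset.range 9,
        (fun x : ZMod (3 ^ 2) => 1 + 4 * x + 4 * x ^ 3 + 2 * x ^ 5)^[k] a = b := by decide
    obtain ⟨k, -, hk⟩ := key a b
    exact ⟨k, hk⟩
  · intro g hg
    rw [g_eq g hg]
    refine ⟨?_, ?_, ?_, ?_, ?_, ?_, ?_, ?_, ?_⟩ <;> decide
  · intro h
    set F : ℤ_[3] → ℤ_[3] := fun t => 1 + 4 * t + 4 * t ^ 3 + 2 * t ^ 5 with hF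
    have orbit : ∀ k : ℕ, PadicInt.toZModPow 3 (F^[k] 0) ∈
        ({0, 1, 11, 15, 7, 23, 3, 13, 17} : Finset (ZMod (3 ^ 3))) := by
      intro k
      induction k with
      | zero => simp
      | succ k ih =>
        rw [Function.iterate_succ_apply']
        have : PadicInt.toZModPow 3 (F (F^[k] 0)) =
            1 + 4 * (PadicInt.toZModPow 3 (F^[k] 0)) +
              4 * (PadicInt.toZModPow 3 (F^[k] 0)) ^ 3 +
              2 * (PadicInt.toZModPow 3 (F^[k] 0)) ^ 5 := hom_poly _
        rw [this]
        revert ih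
        generalize (PadicInt.toZModPow 3 (F^[k] 0)) = a
        revert a; decide
    have hd := h 0
    rw [Metric.dense_iff] at hd
    have hε : (0:ℝ) < (3:ℝ) ^ (-(3:ℤ)) := by positivity
    obtain ⟨y, hy1, k, hk⟩ := hd 2 _ hε
    rw [Metric.mem_ball, dist_eq_norm] at hy1
    have hle : y - 2 ∈ Ideal.span {((3:ℕ):ℤ_[3]) ^ 3} := by
      rw [← PadicInt.norm_le_pow_iff_mem_span_pow]
      exact_mod_cast hy1.le
    rw [← PadicInt.ker_toZModPow, RingHom.mem_ker, map_sub] at hle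
    have h2 : PadicInt.toZModPow 3 (2 : ℤ_[3]) = 2 := map_ofNat _ 2
    have hy2 : PadicInt.toZModPow 3 y = 2 := by
      rw [h2] at hle
      linear_combination hle
    have := orbit k
    simp only at hk
    rw [hk, hy2] at this
    revert this
    decide
end

section
/- Let f(x) = a_d x^d + ... + a_1 x + 1 be a polynomial over ℤ_2 and set A_0 = Σ_{i even, i≠0} a_i and A_1 = Σ_{i odd} a_i. Then the induced map f_{/2} on ℤ/4ℤ has a full cycle if and only if a_1 ≡ 1 mod 2, A_1 ≡ 1 mod 2, and A_0 + A_1 ≡ 1 mod 4. -/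
/-!
Modulo 4, `x ^ i` equals `x ^ 2` for even `i ≥ 2` and `x ^ 3` for odd `i ≥ 3`, while `x ^ 3 = x`
except at `x = 2`. Hence `f` reduces to `1 + a₁ (x - x³) + A₀ x² + A₁ x³` on `ℤ/4ℤ`, with values
`1, 1 + A₀ + A₁, 1 + 2a₁, 1 + A₀ + 3A₁` at `0, 1, 2, 3`. Since `f(2)` is odd, the only possible
4-cycle is `0 → 1 → 2 → 3 → 0`, which gives exactly the three congruences. A map on a finite set
has all orbits full iff it has no proper nonempty invariant subset, which makes the final check
over the 64 residue triples decidable.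
-/

open Polynomial Finset

theorem forall_range_iterate_eq_univ_iff {α : Type*} [Fintype α] (g : α → α) :
    (∀ a, Set.range (fun k : ℕ => g^[k] a) = Set.univ) ↔
      ∀ S : Finset α, S.Nonempty → (∀ x ∈ S, g x ∈ S) → S = univ := by
  classical
  constructor
  · rintro h S ⟨a, ha⟩ hS
    refine eq_univ_of_forall fun b => ?_
    obtain ⟨k, rfl⟩ := (h a).symm ▸ Set.mem_univ b
    exact Set.MapsTo.iterate (s := (S : Set α)) hS k ha
  · intro h a
    have horbit := h ({b | ∃ k, g^[k] a = b} : Finset α) ⟨a, by simpa using ⟨0, rfl⟩⟩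
      (by simpa using fun k => ⟨k + 1, Function.iterate_succ_apply' g k a⟩)
    exact Set.eq_univ_of_forall fun b => by simpa using (Finset.ext_iff.1 horbit b).2 (mem_univ b)

theorem ZMod.four_pow_add_four (x : ZMod 4) (i : ℕ) : x ^ (i + 4) = x ^ (i + 2) := by
  rw [pow_add, pow_add, show x ^ 4 = x ^ 2 by revert x; decide]

theorem ZMod.four_pow_eq (x : ZMod 4) : ∀ i : ℕ,
    x ^ i = (if i = 0 then 1 else 0) + (if i = 1 then x - x ^ 3 else 0) +
      (if Even i ∧ i ≠ 0 then x ^ 2 else 0) + (if Odd i then x ^ 3 else 0)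
  | 0 => by simp
  | 1 => by simp
  | 2 => by simp
  | 3 => by simp [show Odd 3 by decide]
  | i + 4 => by
    rw [ZMod.four_pow_add_four, ZMod.four_pow_eq x (i + 2)]
    simp [Nat.even_add, Nat.odd_add, show Even 4 by decide]

theorem eval_eq_of_zmod_four (G : (ZMod 4)[X]) {n : ℕ} (hn : G.natDegree < n) (x : ZMod 4) :
    G.eval x = G.coeff 0 + G.coeff 1 * (x - x ^ 3) +
      (∑ i ∈ range n, if Even i ∧ i ≠ 0 then G.coeff i else 0) * x ^ 2 +
      (∑ i ∈ range n, if Odd i then G.coeff i else 0) * x ^ 3 := by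
  rw [eval_eq_sum_range' hn, sum_congr rfl fun i _ => congrArg _ (ZMod.four_pow_eq x i)]
  simp_rw [mul_add, mul_ite, mul_zero, sum_add_distrib, sum_ite_eq', sum_mul, ite_mul, zero_mul]
  have h1 : (if 1 ∈ range n then G.coeff 1 * (x - x ^ 3) else 0) = G.coeff 1 * (x - x ^ 3) := by
    split_ifs with h
    · rfl
    · rw [coeff_eq_zero_of_natDegree_lt (by rw [mem_range] at h; omega), zero_mul]
  rw [if_pos (mem_range.2 (Nat.zero_lt_of_lt hn)), mul_one, h1]

theorem PadicInt.toZModPow_eq_iff {p : ℕ} [Fact p.Prime] {n : ℕ} {x y : ℤ_[p]} :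
    toZModPow n x = toZModPow n y ↔ ∃ z, x = y + p ^ n * z := by
  rw [← sub_eq_zero, ← map_sub, ← RingHom.mem_ker, ker_toZModPow, Ideal.mem_span_singleton']
  exact exists_congr fun z => ⟨fun h => by linear_combination -h, fun h => by linear_combination -h⟩

theorem PadicInt.exists_eq_one_add_four_mul_iff (c : ℤ_[2]) :
    (∃ z, c = 1 + 4 * z) ↔ toZModPow 2 c = 1 := by
  rw [← map_one (toZModPow 2), toZModPow_eq_iff]
  norm_num

theorem PadicInt.exists_eq_one_add_two_mul_iff (c : ℤ_[2]) :
    (∃ z, c = 1 + 2 * z) ↔ 2 * toZModPow 2 c = 2 := by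
  rw [← map_ofNat (toZModPow 2) 2, ← map_mul, toZModPow_eq_iff]
  refine exists_congr fun z => ⟨fun h => by push_cast; linear_combination 2 * h, fun h => ?_⟩
  exact mul_left_cancel₀ (two_ne_zero (α := ℤ_[2])) (by push_cast at h; linear_combination h)

theorem range_iterate_eq_univ_iff_zmod_four (c A B : ZMod 4) :
    (∀ a, Set.range (fun k : ℕ =>
        (fun x => 1 + c * (x - x ^ 3) + A * x ^ 2 + B * x ^ 3)^[k] a) = Set.univ) ↔
      2 * c = 2 ∧ 2 * B = 2 ∧ A + B = 1 := by
  rw [forall_range_iterate_eq_univ_iff]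
  revert c A B
  decide

theorem stmt18 (F : Polynomial ℤ_[2]) (h0 : F.coeff 0 = 1) :
    (∀ g : ZMod (2 ^ 2) → ZMod (2 ^ 2),
        (∀ x : ℤ_[2], g (PadicInt.toZModPow 2 x) = PadicInt.toZModPow 2 (F.eval x)) →
          ∀ a : ZMod (2 ^ 2), Set.range (fun k : ℕ => g^[k] a) = Set.univ) ↔
      ((∃ z : ℤ_[2], F.coeff 1 = 1 + 2 * z) ∧
        (∃ z : ℤ_[2],
          (∑ i ∈ Finset.range (F.natDegree + 1), if Odd i then F.coeff i else 0) = 1 + 2 * z) ∧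
        (∃ z : ℤ_[2],
          (∑ i ∈ Finset.range (F.natDegree + 1), if Even i ∧ i ≠ 0 then F.coeff i else 0) +
            (∑ i ∈ Finset.range (F.natDegree + 1), if Odd i then F.coeff i else 0) =
            1 + 4 * z)) := by
  set φ := PadicInt.toZModPow (p := 2) 2
  set A₀ := ∑ i ∈ range (F.natDegree + 1), if Even i ∧ i ≠ 0 then F.coeff i else 0
  set A₁ := ∑ i ∈ range (F.natDegree + 1), if Odd i then F.coeff i else 0
  set g : ZMod 4 → ZMod 4 := fun x => 1 + φ (F.coeff 1) * (x - x ^ 3) + φ A₀ * x ^ 2 + φ A₁ * x ^ 3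
  have hg : ∀ x, g (φ x) = φ (F.eval x) := by
    intro x
    rw [← eval₂_hom, ← eval_map,
      eval_eq_of_zmod_four (F.map φ) (natDegree_map_le.trans_lt (Nat.lt_succ_self _))]
    simp [g, A₀, A₁, h0, map_sum, apply_ite φ]
  have hg_unique : ∀ g' : ZMod 4 → ZMod 4, (∀ x, g' (φ x) = φ (F.eval x)) → g' = g := by
    intro g' hg'
    funext b
    rw [← ZMod.natCast_zmod_val b, ← map_natCast φ, hg', hg]
  rw [PadicInt.exists_eq_one_add_two_mul_iff, PadicInt.exists_eq_one_add_two_mul_iff,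
    PadicInt.exists_eq_one_add_four_mul_iff, map_add, ← range_iterate_eq_univ_iff_zmod_four]
  exact ⟨fun h => h g hg, fun h g' hg' => hg_unique g' hg' ▸ h⟩
end
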